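/- arXiv:2009.00697 — 8 statements merged into one kernel-verified Lean document; each statement's English description precedes it below -/
import Mathlib

section
/- Let H = (V,E) be a hypergraph and let x be a fractional matching on H. Then there exists a finitely supported probability distribution over matchings of H, i.e., matchings M_1, …, M_q together with coefficients λ_1, …, λ_q ≥ 0 with λ_1 + ⋯ + λ_q = 1, such that for every edge e ∈ E one has Σ_{i : e ∈ M_i} λ_i ≥ x(e) / (|e| − (|e|−1)·x(e)). -/
/-!
Put `D e = |e| - (|e| - 1) x e` and `y e = x e / D e`. An edge `f` meets edges of total
`x`-weight at most `D f`: besides `f` itself, each of its `|f|` vertices lies in edges of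
weight at most `1 - x f`. Hence for any weights `w ≥ 0` the greedy matching that repeatedly
takes an edge maximising `w f / D f` and discards the edges meeting it has weight at least
`∑ w e y e`. A separating hyperplane then turns "every nonnegative weighting is beaten by
some matching" into a convex combination of matchings dominating `y` coordinatewise.
-/

open Finset

lemma exists_mem_stdSimplex_le_sum_smul_of_forall_dotProduct_le {κ ι : Type*} [Fintype κ]
    [Fintype ι] (φ : κ → ι → ℝ) (y : ι → ℝ)
    (h : ∀ w : ι → ℝ, 0 ≤ w → ∃ k, w ⬝ᵥ y ≤ w ⬝ᵥ φ k) :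
    ∃ μ ∈ stdSimplex ℝ κ, y ≤ ∑ k, μ k • φ k := by
  classical
  by_contra! hcon
  set L := Fintype.linearCombination ℝ φ
  have hdisj : Disjoint (L '' stdSimplex ℝ κ) (Set.Ici y) := by
    rw [Set.disjoint_left]
    rintro _ ⟨μ, hμ, rfl⟩ hle
    exact hcon μ hμ (by simpa [L, Fintype.linearCombination_apply] using hle)
  obtain ⟨f, u, v, hfL, huv, hfy⟩ := geometric_hahn_banach_compact_closed
    ((convex_stdSimplex ℝ κ).linear_image L)
    ((isCompact_stdSimplex ℝ κ).image (LinearMap.continuous_of_finiteDimensional L))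
    (convex_Ici y) isClosed_Ici hdisj
  set w : ι → ℝ := fun i => f (Pi.single i 1)
  have hf : ∀ z, f z = w ⬝ᵥ z := fun z => by
    nth_rw 1 [pi_eq_sum_univ' z]
    simp [w, dotProduct, mul_comm]
  have hvy : v < w ⬝ᵥ y := hf y ▸ hfy y Set.self_mem_Ici
  -- `f` is bounded below on the orthant `Ici y`, so its coefficients are nonnegative
  have hw : 0 ≤ w := fun i => by
    by_contra! hi
    rw [Pi.zero_apply] at hi
    set t := (w ⬝ᵥ y - v) / -w i
    have hyt : y ≤ y + t • Pi.single i 1 :=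
      le_add_of_nonneg_right (smul_nonneg (div_nonneg (by linarith) (by linarith))
        (Pi.single_nonneg.2 zero_le_one))
    have hwt : v < w ⬝ᵥ y + t * w i := by
      simpa [hf, dotProduct_add, dotProduct_smul, dotProduct_single] using hfy _ hyt
    have : t * w i = v - w ⬝ᵥ y := by
      simp only [t]
      field_simp [hi.ne]
      ring
    linarith
  obtain ⟨k, hk⟩ := h w hw
  have hφk : φ k ∈ L '' stdSimplex ℝ κ :=
    ⟨Pi.single k 1, single_mem_stdSimplex ℝ k, by simp [L]⟩
  linarith [hfL _ hφk, hf (φ k)]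

lemma exists_pairwise_disjoint_subset_sum_mul_div_le_sum {α : Type*} [DecidableEq α]
    (x D w : Finset α → ℝ) (F : Finset (Finset α)) (hne : ∀ e ∈ F, e.Nonempty)
    (hx : ∀ e ∈ F, 0 ≤ x e) (hD : ∀ e ∈ F, 0 < D e) (hw : ∀ e ∈ F, 0 ≤ w e)
    (hload : ∀ f ∈ F, ∑ e ∈ F with ¬Disjoint e f, x e ≤ D f) :
    ∃ M ⊆ F, (M : Set (Finset α)).Pairwise Disjoint ∧
      ∑ e ∈ F, w e * (x e / D e) ≤ ∑ e ∈ M, w e := by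
  induction F using Finset.strongInduction with
  | _ F ih =>
  rcases F.eq_empty_or_nonempty with rfl | hF
  · exact ⟨∅, empty_subset _, by simp, by simp⟩
  obtain ⟨f, hfF, hfmax⟩ := F.exists_max_image (fun e => w e / D e) hF
  set F' := F.filter (Disjoint · f)
  have hF'F : F' ⊆ F := filter_subset _ _
  have hfF' : f ∉ F' := fun h =>
    (hne f hfF).ne_empty ((disjoint_self_iff_empty f).1 (mem_filter.1 h).2)
  obtain ⟨M', hM'F', hM', hsum'⟩ := ih F' ((ssubset_iff_of_subset hF'F).2 ⟨f, hfF, hfF'⟩)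
    (fun e he => hne e (hF'F he)) (fun e he => hx e (hF'F he)) (fun e he => hD e (hF'F he))
    (fun e he => hw e (hF'F he))
    (fun g hg => (sum_le_sum_of_subset_of_nonneg (filter_subset_filter _ hF'F)
      fun e he _ => hx e (mem_filter.1 he).1).trans (hload g (hF'F hg)))
  have hconflict : ∑ e ∈ F with ¬Disjoint e f, w e * (x e / D e) ≤ w f := by
    calc ∑ e ∈ F with ¬Disjoint e f, w e * (x e / D e)
        ≤ ∑ e ∈ F with ¬Disjoint e f, w f / D f * x e := by
          refine sum_le_sum fun e he => ?_
          have heF := (mem_filter.1 he).1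
          rw [mul_div_left_comm, mul_comm]
          exact mul_le_mul_of_nonneg_right (hfmax e heF) (hx e heF)
      _ = w f / D f * ∑ e ∈ F with ¬Disjoint e f, x e := by rw [mul_sum]
      _ ≤ w f / D f * D f := by
          gcongr
          · exact div_nonneg (hw f hfF) (hD f hfF).le
          · exact hload f hfF
      _ = w f := div_mul_cancel₀ _ (hD f hfF).ne'
  refine ⟨insert f M', insert_subset hfF (hM'F'.trans hF'F), ?_, ?_⟩
  · rw [coe_insert, Set.pairwise_insert_of_symm]
    exact ⟨hM', fun e he _ => (mem_filter.1 (hM'F' he)).2.symm⟩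
  · rw [← sum_filter_add_sum_filter_not F (Disjoint · f), sum_insert fun h => hfF' (hM'F' h)]
    linarith

noncomputable def marginalDenom {α : Type*} (x : Finset α → ℝ) (e : Finset α) : ℝ :=
  e.card - (e.card - 1) * x e

lemma one_le_marginalDenom {α : Type*} {x : Finset α → ℝ} {e : Finset α} (he : e.Nonempty)
    (hx : x e ≤ 1) : 1 ≤ marginalDenom x e := by
  have hcard : (1 : ℝ) ≤ e.card := by exact_mod_cast card_pos.2 he
  unfold marginalDenom
  nlinarith

section

variable {α : Type*} [DecidableEq α]

lemma sum_sum_filter_mem_eq_sum_card_inter_mul (E : Finset (Finset α)) (x : Finset α → ℝ)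
    (f : Finset α) :
    ∑ v ∈ f, ∑ e ∈ E with v ∈ e, x e = ∑ e ∈ E, (f ∩ e).card * x e := by
  simp_rw [sum_filter]
  rw [sum_comm]
  refine sum_congr rfl fun e _ => ?_
  rw [sum_ite_mem, sum_const, nsmul_eq_mul]

lemma sum_filter_not_disjoint_le_marginalDenom (E : Finset (Finset α)) (x : Finset α → ℝ)
    {f : Finset α} (hf : f ∈ E) (hfne : f.Nonempty) (hx : ∀ e ∈ E, 0 ≤ x e)
    (hfrac : ∀ v ∈ f, ∑ e ∈ E with v ∈ e, x e ≤ 1) :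
    ∑ e ∈ E with ¬Disjoint e f, x e ≤ marginalDenom x f := by
  -- `f` is counted `|f|` times in `∑ v ∈ f, ∑ e ∋ v, x e`, every other edge meeting `f` at
  -- least once
  have hpoint : ∀ e ∈ E, (if ¬Disjoint e f then x e else 0) +
      (if e = f then ((f.card : ℝ) - 1) * x f else 0) ≤ (f ∩ e).card * x e := by
    intro e he
    by_cases hef : e = f
    · subst hef
      simp only [disjoint_self_iff_empty, hfne.ne_empty, inter_self, if_true, not_false_eq_true]
      linarith
    by_cases hdisj : Disjoint e f
    · simpa [hef, hdisj] using mul_nonneg (Nat.cast_nonneg _) (hx e he)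
    · have hcard : (1 : ℝ) ≤ (f ∩ e).card := by
        rw [not_disjoint_iff_nonempty_inter, inter_comm] at hdisj
        exact_mod_cast card_pos.2 hdisj
      simpa [hef, hdisj] using le_mul_of_one_le_left (hx e he) hcard
  calc ∑ e ∈ E with ¬Disjoint e f, x e
      = ∑ e ∈ E, ((if ¬Disjoint e f then x e else 0) +
          (if e = f then ((f.card : ℝ) - 1) * x f else 0)) - (f.card - 1) * x f := by
        rw [sum_add_distrib, sum_ite_eq' E f, if_pos hf, sum_filter]
        ring
    _ ≤ ∑ e ∈ E, (f ∩ e).card * x e - (f.card - 1) * x f := by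
        gcongr with e he
        exact hpoint e he
    _ = ∑ v ∈ f, ∑ e ∈ E with v ∈ e, x e - (f.card - 1) * x f := by
        rw [sum_sum_filter_mem_eq_sum_card_inter_mul]
    _ ≤ ∑ v ∈ f, 1 - (f.card - 1) * x f := by gcongr with v hv; exact hfrac v hv
    _ = marginalDenom x f := by simp [marginalDenom]

lemma exists_pairwise_disjoint_subset_sum_mul_div_marginalDenom_le_sum (V : Finset α)
    (E : Finset (Finset α)) (hE : ∀ e ∈ E, e.Nonempty ∧ e ⊆ V) (x : Finset α → ℝ)
    (hx01 : ∀ e ∈ E, 0 ≤ x e ∧ x e ≤ 1)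
    (hxfrac : ∀ v ∈ V, ∑ e ∈ E.filter (fun e => v ∈ e), x e ≤ 1)
    (w : Finset α → ℝ) (hw : ∀ e ∈ E, 0 ≤ w e) :
    ∃ M ⊆ E, (M : Set (Finset α)).Pairwise Disjoint ∧
      ∑ e ∈ E, w e * (x e / marginalDenom x e) ≤ ∑ e ∈ M, w e :=
  exists_pairwise_disjoint_subset_sum_mul_div_le_sum x (marginalDenom x) w E
    (fun e he => (hE e he).1) (fun e he => (hx01 e he).1)
    (fun e he => one_pos.trans_le (one_le_marginalDenom (hE e he).1 (hx01 e he).2)) hw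
    fun f hf => sum_filter_not_disjoint_le_marginalDenom E x hf (hE f hf).1
      (fun e he => (hx01 e he).1) fun v hv => hxfrac v ((hE f hf).2 hv)

end

lemma dotProduct_coe_eq_sum_dite {β : Type*} [DecidableEq β] (E : Finset β) (w : E → ℝ)
    (g : β → ℝ) :
    w ⬝ᵥ (fun e : E => g e) = ∑ e ∈ E, (if h : e ∈ E then w ⟨e, h⟩ else 0) * g e := by
  rw [← sum_coe_sort E]
  simp [dotProduct]

/-- For any hypergraph `H = (V, E)` and fractional matching `x`,
there exists a finitely supported probability distribution over matchings of `H`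
such that every edge `e ∈ E` has marginal at least `x e / (|e| - (|e| - 1) * x e)`. -/
theorem exists_distribution_over_matchings
    {α : Type*} [DecidableEq α] (V : Finset α) (E : Finset (Finset α))
    (hE : ∀ e ∈ E, e.Nonempty ∧ e ⊆ V)
    (x : Finset α → ℝ)
    (hx01 : ∀ e ∈ E, 0 ≤ x e ∧ x e ≤ 1)
    (hxfrac : ∀ v ∈ V, ∑ e ∈ E.filter (fun e => v ∈ e), x e ≤ 1) :
    ∃ (q : ℕ) (M : Fin q → Finset (Finset α)) (lam : Fin q → ℝ),
      (∀ i, M i ⊆ E) ∧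
      (∀ i, ∀ e₁ ∈ M i, ∀ e₂ ∈ M i, e₁ ≠ e₂ → Disjoint e₁ e₂) ∧
      (∀ i, 0 ≤ lam i) ∧ (∑ i, lam i = 1) ∧
      (∀ e ∈ E,
        x e / ((e.card : ℝ) - ((e.card : ℝ) - 1) * x e)
          ≤ ∑ i, if e ∈ M i then lam i else 0) := by
  classical
  set matchings :=
    E.powerset.filter fun N : Finset (Finset α) => (N : Set (Finset α)).Pairwise Disjoint
  set M : Fin matchings.card → Finset (Finset α) := fun i => matchings.equivFin.symm i
  have hM : ∀ i, M i ⊆ E ∧ (M i : Set (Finset α)).Pairwise Disjoint := fun i => by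
    obtain ⟨hsub, hpair⟩ := mem_filter.1 (matchings.equivFin.symm i).2
    exact ⟨mem_powerset.1 hsub, hpair⟩
  obtain ⟨lam, hlam, hdom⟩ := exists_mem_stdSimplex_le_sum_smul_of_forall_dotProduct_le
    (fun i (e : E) => if (e : Finset α) ∈ M i then (1 : ℝ) else 0)
    (fun e => x e / marginalDenom x e) fun w hw => by
      obtain ⟨N, hNE, hN, hsum⟩ :=
        exists_pairwise_disjoint_subset_sum_mul_div_marginalDenom_le_sum V E hE x hx01 hxfrac
          (fun e => if h : e ∈ E then w ⟨e, h⟩ else 0)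
          fun e he => by simpa [he] using hw ⟨e, he⟩
      refine ⟨matchings.equivFin ⟨N, by simp [matchings, hNE, hN]⟩, ?_⟩
      simp only [M, Equiv.symm_apply_apply]
      calc _ = _ := dotProduct_coe_eq_sum_dite E w _
        _ ≤ _ := hsum
        _ = _ := by simp [sum_ite_mem, inter_eq_right.2 hNE]
        _ = _ := (dotProduct_coe_eq_sum_dite E w fun e => if e ∈ N then 1 else 0).symm
  refine ⟨_, M, lam, fun i => (hM i).1, fun i => (hM i).2, hlam.1, hlam.2, fun e he => ?_⟩
  simpa [Finset.sum_apply, marginalDenom] using hdom ⟨e, he⟩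
end

section
/- Let H = (V,E) be a hypergraph, w : E → ℝ_{≥0} edge weights, b : V → ℤ_{≥1} vertex capacities, and let x be a fractional b-matching on H. Then there exists a b-matching M ⊆ E such that Σ_{e ∈ M} (|e| − (|e|−1)·x(e))·w(e) ≥ Σ_{e ∈ E} w(e)·x(e). -/
open Finset

theorem greedy_aux {α : Type*} [DecidableEq α] (n : ℕ) :
    ∀ (E : Finset (Finset α)) (V : Finset α), E.card = n →
    (∀ e ∈ E, e ⊆ V) →
    ∀ (w : Finset α → ℝ), (∀ e ∈ E, 0 ≤ w e) →
    ∀ (b : α → ℤ), (∀ v ∈ V, 0 ≤ b v) →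
    ∀ (x : Finset α → ℝ), (∀ e ∈ E, 0 ≤ x e ∧ x e ≤ 1) →
    ∀ (c : α → ℝ), (∀ v ∈ V, 0 ≤ c v) →
    (∀ v ∈ V, ∀ e ∈ E, v ∈ e →
      w e * ((∑ f ∈ E.filter (fun f => v ∈ f), x f) - (b v : ℝ)) ≤ c v) →
    ∃ M ⊆ E, (∀ v ∈ V, ((M.filter (fun e => v ∈ e)).card : ℤ) ≤ b v) ∧
      ∑ e ∈ E, w e * x e
        ≤ (∑ e ∈ M, ((e.card : ℝ) - ((e.card : ℝ) - 1) * x e) * w e) + ∑ v ∈ V, c v := by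
  induction n with
  | zero =>
    intro E V hcard hEV w hw b hb0 x hx c hc hyp
    obtain rfl : E = ∅ := card_eq_zero.mp hcard
    exact ⟨∅, by simp, by simpa using hb0, by simpa using Finset.sum_nonneg hc⟩
  | succ n ih =>
    intro E V hcard hEV w hw b hb0 x hx c hc hyp
    have hEne : E.Nonempty := card_pos.mp (by omega)
    obtain ⟨e, heE, hemax⟩ := E.exists_max_image w hEne
    have heV : e ⊆ V := hEV e heE
    have hwe : 0 ≤ w e := hw e heE
    have hxe0 : 0 ≤ x e := (hx e heE).1
    have hxe1 : x e ≤ 1 := (hx e heE).2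
    set E' := E.erase e with hE'
    have hcard' : E'.card = n := by
      rw [hE', card_erase_of_mem heE, hcard]
      omega
    have hsum' : ∀ v : α, (∑ f ∈ E'.filter (fun f => v ∈ f), x f)
        = (∑ f ∈ E.filter (fun f => v ∈ f), x f) - (if v ∈ e then x e else 0) := by
      intro v
      rw [hE', filter_erase]
      by_cases hve : v ∈ e
      · rw [sum_erase_eq_sub (mem_filter.mpr ⟨heE, hve⟩)]
        simp [hve]
      · rw [erase_eq_of_notMem (by simp [hve])]
        simp [hve]
    have hsumnn : ∀ v : α, 0 ≤ ∑ f ∈ E'.filter (fun f => v ∈ f), x f := by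
      intro v
      exact Finset.sum_nonneg fun f hf => (hx f (mem_of_mem_erase (mem_filter.mp hf).1)).1
    have hxle : ∀ v ∈ e, x e ≤ ∑ f ∈ E.filter (fun f => v ∈ f), x f := by
      intro v hv
      exact Finset.single_le_sum (fun f hf => (hx f (mem_filter.mp hf).1).1)
        (mem_filter.mpr ⟨heE, hv⟩)
    have hsplit : ∑ f ∈ E, w f * x f = w e * x e + ∑ f ∈ E', w f * x f := by
      rw [hE', ← Finset.sum_erase_add E _ heE]; ring
    by_cases hfit : ∀ v ∈ e, 1 ≤ b v
    · -- Case A: e fits; take it, decrement capacities, add credit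
      set b' : α → ℤ := fun u => if u ∈ e then b u - 1 else b u with hb'
      set c' : α → ℝ := fun u => c u + (if u ∈ e then w e * (1 - x e) else 0) with hc'
      have hcred : 0 ≤ w e * (1 - x e) := mul_nonneg hwe (by linarith)
      obtain ⟨M', hM'E, hM'match, hM'bound⟩ := ih E' V hcard'
        (fun f hf => hEV f (mem_of_mem_erase hf)) w
        (fun f hf => hw f (mem_of_mem_erase hf)) b'
        (fun v hv => by
          by_cases hve : v ∈ e
          · have := hfit v hve; simp only [hb', if_pos hve]; omega
          · simp only [hb', if_neg hve]; exact hb0 v hv)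
        x (fun f hf => hx f (mem_of_mem_erase hf)) c'
        (fun v hv => by
          by_cases hve : v ∈ e
          · rw [show c' v = c v + w e * (1 - x e) from by simp [hc', hve]]
            linarith [hc v hv]
          · rw [show c' v = c v from by simp [hc', hve]]
            exact hc v hv)
        (fun v hv f hf hvf => by
          have hfE : f ∈ E := mem_of_mem_erase hf
          have hwf : 0 ≤ w f := hw f hfE
          have hwfe : w f ≤ w e := hemax f hfE
          by_cases hve : v ∈ e
          · rw [show c' v = c v + w e * (1 - x e) from by simp [hc', hve]]
            rw [show ((b' v : ℤ) : ℝ) = (b v : ℝ) - 1 from by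
              simp only [hb', if_pos hve]; push_cast; ring]
            rw [hsum' v, if_pos hve]
            have h1 : w f * ((∑ g ∈ E.filter (fun g => v ∈ g), x g) - b v) ≤ c v := by
              rcases le_or_gt ((∑ g ∈ E.filter (fun g => v ∈ g), x g) - b v) 0 with h | h
              · exact le_trans (mul_nonpos_of_nonneg_of_nonpos hwf h) (hc v hv)
              · exact hyp v hv f hfE hvf
            have h2 : w f * (1 - x e) ≤ w e * (1 - x e) :=
              mul_le_mul_of_nonneg_right hwfe (by linarith)
            nlinarith [h1, h2]
          · rw [show c' v = c v from by simp [hc', hve]]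
            rw [show ((b' v : ℤ) : ℝ) = (b v : ℝ) from by simp [hb', hve]]
            rw [hsum' v, if_neg hve, sub_zero]
            exact hyp v hv f hfE hvf)
      have heM' : e ∉ M' := fun h => notMem_erase e E (hM'E h)
      refine ⟨insert e M', ?_, ?_, ?_⟩
      · intro f hf
        rcases mem_insert.mp hf with rfl | hf
        · exact heE
        · exact mem_of_mem_erase (hM'E hf)
      · intro v hv
        by_cases hve : v ∈ e
        · rw [filter_insert, if_pos hve, card_insert_of_notMem
            (fun h => heM' (mem_filter.mp h).1)]
          have := hM'match v hv
          simp only [hb', if_pos hve] at this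
          push_cast
          omega
        · rw [filter_insert, if_neg hve]
          have := hM'match v hv
          simpa [hb', hve] using this
      · rw [Finset.sum_insert heM']
        have hVsum : ∑ v ∈ V, c' v = (∑ v ∈ V, c v) + (e.card : ℝ) * (w e * (1 - x e)) := by
          rw [hc', Finset.sum_add_distrib]
          congr 1
          rw [Finset.sum_ite_mem, (Finset.inter_eq_right).mpr heV,
            Finset.sum_const, nsmul_eq_mul]
        rw [hVsum] at hM'bound
        rw [hsplit]
        have hterm : ((e.card : ℝ) - ((e.card : ℝ) - 1) * x e) * w e
            = w e * x e + (e.card : ℝ) * (w e * (1 - x e)) := by ring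
        linarith [hM'bound]
    · -- Case B: some vertex of e is saturated; skip e, pay from its credit
      push_neg at hfit
      obtain ⟨v, hve, hbv⟩ := hfit
      have hvV : v ∈ V := heV hve
      have hbv0 : b v = 0 := by have := hb0 v hvV; omega
      have hbv0' : ((b v : ℤ) : ℝ) = 0 := by exact_mod_cast hbv0
      have hpay : w e * x e ≤ c v := by
        have h1 := hyp v hvV e heE hve
        have h2 := hxle v hve
        nlinarith [h1, h2, hbv0', hwe, hxe0]
      set c' : α → ℝ := fun u => c u - (if u = v then w e * x e else 0) with hc'
      obtain ⟨M', hM'E, hM'match, hM'bound⟩ := ih E' V hcard'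
        (fun f hf => hEV f (mem_of_mem_erase hf)) w
        (fun f hf => hw f (mem_of_mem_erase hf)) b hb0
        x (fun f hf => hx f (mem_of_mem_erase hf)) c'
        (fun u hu => by
          by_cases huv : u = v
          · subst huv
            rw [show c' u = c u - w e * x e from by simp [hc']]
            linarith [hpay]
          · rw [show c' u = c u from by simp [hc', huv]]
            exact hc u hu)
        (fun u hu f hf hvf => by
          have hfE : f ∈ E := mem_of_mem_erase hf
          have hwf : 0 ≤ w f := hw f hfE
          have hwfe : w f ≤ w e := hemax f hfE
          by_cases huv : u = v
          · subst huv
            rw [show c' u = c u - w e * x e from by simp [hc']]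
            rw [hsum' u, if_pos hve]
            have hkey : w e * ((∑ g ∈ E.filter (fun g => u ∈ g), x g) - b u) ≤ c u :=
              hyp u hu e heE hve
            have hnn : 0 ≤ (∑ g ∈ E.filter (fun g => u ∈ g), x g) - x e - (b u : ℝ) := by
              have := hsumnn u
              rw [hsum' u, if_pos hve] at this
              linarith [hbv0'.le]
            have hmm : w f * ((∑ g ∈ E.filter (fun g => u ∈ g), x g) - x e - (b u : ℝ))
                ≤ w e * ((∑ g ∈ E.filter (fun g => u ∈ g), x g) - x e - (b u : ℝ)) :=
              mul_le_mul_of_nonneg_right hwfe hnn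
            nlinarith [hkey, hmm]
          · rw [show c' u = c u from by simp [hc', huv]]
            rw [hsum' u]
            have hmono : (∑ g ∈ E.filter (fun g => u ∈ g), x g) - (if u ∈ e then x e else 0)
                ≤ ∑ g ∈ E.filter (fun g => u ∈ g), x g := by
              by_cases hue : u ∈ e <;> simp [hue] <;> linarith [hxe0]
            rcases le_or_gt ((∑ g ∈ E.filter (fun g => u ∈ g), x g)
                - (if u ∈ e then x e else 0) - (b u : ℝ)) 0 with h | h
            · exact le_trans (mul_nonpos_of_nonneg_of_nonpos hwf h) (hc u hu)
            · calc w f * ((∑ g ∈ E.filter (fun g => u ∈ g), x g)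
                    - (if u ∈ e then x e else 0) - (b u : ℝ))
                  ≤ w f * ((∑ g ∈ E.filter (fun g => u ∈ g), x g) - (b u : ℝ)) := by
                    apply mul_le_mul_of_nonneg_left _ hwf
                    linarith [hmono]
                _ ≤ c u := hyp u hu f hfE hvf)
      refine ⟨M', fun f hf => mem_of_mem_erase (hM'E hf), hM'match, ?_⟩
      have hVsum : ∑ u ∈ V, c' u = (∑ u ∈ V, c u) - w e * x e := by
        rw [hc', Finset.sum_sub_distrib]
        congr 1
        rw [Finset.sum_ite_eq' V v (fun _ => w e * x e), if_pos hvV]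
      rw [hVsum] at hM'bound
      rw [hsplit]
      linarith [hM'bound]

/-- **Theorem 2, greedy for hypergraph b-matching.**
For any hypergraph `H = (V, E)`, nonnegative edge weights `w`, vertex capacities
`b : V → ℤ≥1`, and fractional `b`-matching `x`, there exists a `b`-matching `M`
with `∑_{e ∈ M} (|e| - (|e| - 1) x e) * w e ≥ ∑_{e ∈ E} w e * x e`. -/
theorem exists_bMatching_greedy_guarantee
    {α : Type*} [DecidableEq α] (V : Finset α) (E : Finset (Finset α))
    (hE : ∀ e ∈ E, e.Nonempty ∧ e ⊆ V)
    (w : Finset α → ℝ) (hw : ∀ e ∈ E, 0 ≤ w e)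
    (b : α → ℤ) (hb : ∀ v ∈ V, 1 ≤ b v)
    (x : Finset α → ℝ)
    (hx01 : ∀ e ∈ E, 0 ≤ x e ∧ x e ≤ 1)
    (hxfrac : ∀ v ∈ V, ∑ e ∈ E.filter (fun e => v ∈ e), x e ≤ (b v : ℝ)) :
    ∃ M ⊆ E,
      (∀ v ∈ V, ((M.filter (fun e => v ∈ e)).card : ℤ) ≤ b v) ∧
      ∑ e ∈ E, w e * x e
        ≤ ∑ e ∈ M, ((e.card : ℝ) - ((e.card : ℝ) - 1) * x e) * w e := by
  obtain ⟨M, hME, hMmatch, hMbound⟩ := greedy_aux E.card E V rfl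
    (fun e he => (hE e he).2) w hw b (fun v hv => by linarith [hb v hv]) x hx01
    (fun _ => 0) (fun v _ => le_refl 0)
    (fun v hv e he hve =>
      mul_nonpos_of_nonneg_of_nonpos (hw e he) (by linarith [hxfrac v hv]))
  exact ⟨M, hME, hMmatch, by simpa using hMbound⟩
end

section
/- Let U be a finite set, let 𝒮 be a collection of subsets of U, and let p : U → [0,1]. Suppose that for every weight function w : U → ℝ there exists a set S ∈ 𝒮 with Σ_{u ∈ S} w(u) ≥ Σ_{u ∈ U} p(u)·w(u). Then there exist sets S_1, …, S_q ∈ 𝒮 together with coefficients λ_1, …, λ_q ≥ 0 satisfying λ_1 + ⋯ + λ_q = 1 such that Σ_{i : u ∈ S_i} λ_i ≥ p(u) for every u ∈ U. -/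
open Matrix Pointwise

/-!
The set `P = conv {χ_S : S ∈ 𝒮} + (-∞, 0]^U` of vectors dominated by a convex combination of
incidence vectors is closed and convex. If `p ∉ P`, a separating hyperplane gives weights `w`
with `⟪w, p⟫ > ⟪w, y⟫` for every `y ∈ P`, in particular `∑_{u ∈ S} w u = ⟪w, χ_S⟫ < ⟪w, p⟫` for
every `S ∈ 𝒮`, contradicting the hypothesis. So `p ≤ ∑ λ_i χ_{S_i}` for some convex combination.
-/

section ConvexHull

variable {R E ι : Type*} [Field R] [LinearOrder R] [IsStrictOrderedRing R] [AddCommGroup E]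
  [Module R E]

theorem exists_fin_weights_of_mem_convexHull_image {f : ι → E} {s : Set ι} {x : E}
    (hx : x ∈ convexHull R (f '' s)) :
    ∃ (q : ℕ) (T : Fin q → ι) (lam : Fin q → R), (∀ i, T i ∈ s) ∧ (∀ i, 0 ≤ lam i) ∧
      ∑ i, lam i = 1 ∧ ∑ i, lam i • f (T i) = x := by
  obtain ⟨κ, _, w, z, hw₀, hw₁, hz, rfl⟩ := mem_convexHull_iff_exists_fintype.1 hx
  choose T hTs hTz using hz
  let e := (Fintype.equivFin κ).symm
  refine ⟨Fintype.card κ, T ∘ e, w ∘ e, fun i => hTs _, fun i => hw₀ _, ?_, ?_⟩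
  · rwa [Function.comp_def, e.sum_comp w]
  · simp only [Function.comp_apply, hTz]
    exact e.sum_comp fun i => w i • z i

end ConvexHull

theorem exists_le_mem_convexHull_of_forall_exists_dotProduct_le {α : Type*} [Fintype α]
    {X : Set (α → ℝ)} (hX : X.Finite) {p : α → ℝ} (h : ∀ w, ∃ x ∈ X, p ⬝ᵥ w ≤ x ⬝ᵥ w) :
    ∃ x ∈ convexHull ℝ X, p ≤ x := by
  classical
  suffices p ∈ convexHull ℝ X + Set.Iic (0 : α → ℝ) by
    obtain ⟨x, hx, c, hc, rfl⟩ := this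
    exact ⟨x, hx, add_le_of_nonpos_right hc⟩
  by_contra hp
  obtain ⟨f, s, hfs, hsp⟩ := geometric_hahn_banach_closed_point
    ((convex_convexHull ℝ X).add (convex_Iic 0))
    (isClosed_Iic.add_left_of_isCompact (hX.isCompact_convexHull ℝ)) hp
  set w := (dotProductEquiv ℝ α).symm f.toLinearMap
  have hf : ∀ y, f y = y ⬝ᵥ w := fun y => by
    rw [dotProduct_comm, ← dotProductEquiv_apply_apply, LinearEquiv.apply_symm_apply]; rfl
  obtain ⟨x, hxX, hpx⟩ := h w
  have hx : f x < s := hfs x ⟨x, subset_convexHull ℝ X hxX, 0, Set.mem_Iic.2 le_rfl, add_zero x⟩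
  rw [hf] at hx hsp
  linarith

section IncidenceVector

variable {α : Type*} [DecidableEq α] (R : Type*) [Semiring R]

def incidenceVector (S : Finset α) : α → R := fun u => if u ∈ S then 1 else 0

variable {R}

theorem incidenceVector_dotProduct [Fintype α] (S : Finset α) (w : α → R) :
    incidenceVector R S ⬝ᵥ w = ∑ u ∈ S, w u := by
  simp [dotProduct, incidenceVector, ite_mul, Finset.sum_ite_mem]

theorem sum_smul_incidenceVector_apply {q : ℕ} (T : Fin q → Finset α) (lam : Fin q → R) (u : α) :
    (∑ i, lam i • incidenceVector R (T i)) u = ∑ i, if u ∈ T i then lam i else 0 := by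
  simp [Finset.sum_apply, incidenceVector]

end IncidenceVector

theorem exists_distribution_of_weightwise_domination_general
    {α : Type*} [Fintype α] [DecidableEq α]
    (𝒮 : Set (Finset α)) (p : α → ℝ)
    (hA : ∀ w : α → ℝ, ∃ S ∈ 𝒮, ∑ u, p u * w u ≤ ∑ u ∈ S, w u) :
    ∃ (q : ℕ) (T : Fin q → Finset α) (lam : Fin q → ℝ),
      (∀ i, T i ∈ 𝒮) ∧ (∀ i, 0 ≤ lam i) ∧ (∑ i, lam i = 1) ∧
      (∀ u, p u ≤ ∑ i, if u ∈ T i then lam i else 0) := by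
  have hdom (w : α → ℝ) : ∃ x ∈ incidenceVector ℝ '' 𝒮, p ⬝ᵥ w ≤ x ⬝ᵥ w := by
    obtain ⟨S, hS, hSw⟩ := hA w
    exact ⟨_, Set.mem_image_of_mem _ hS, by rwa [incidenceVector_dotProduct]⟩
  obtain ⟨x, hx, hpx⟩ :=
    exists_le_mem_convexHull_of_forall_exists_dotProduct_le (𝒮.toFinite.image _) hdom
  obtain ⟨q, T, lam, hT, hlam₀, hlam₁, rfl⟩ := exists_fin_weights_of_mem_convexHull_image hx
  exact ⟨q, T, lam, hT, hlam₀, hlam₁, fun u => (hpx u).trans_eq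
    (sum_smul_incidenceVector_apply T lam u)⟩

/-- **Theorem 4, Carr–Vempala-type result.**
Let `U` be a finite set, `𝒮` a collection of subsets of `U`, and `p : U → [0,1]`.
If for every weight function `w : U → ℝ` there is a set `S ∈ 𝒮` with
`∑_{u ∈ S} w u ≥ ∑_{u ∈ U} p u * w u`, then there is a finitely supported
probability distribution over sets in `𝒮` whose marginal on each `u ∈ U` is
at least `p u`. -/
theorem exists_distribution_of_weightwise_domination
    {α : Type*} [Fintype α] [DecidableEq α]
    (𝒮 : Set (Finset α)) (p : α → ℝ)
    (hp : ∀ u, 0 ≤ p u ∧ p u ≤ 1)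
    (hA : ∀ w : α → ℝ, ∃ S ∈ 𝒮, ∑ u, p u * w u ≤ ∑ u ∈ S, w u) :
    ∃ (q : ℕ) (T : Fin q → Finset α) (lam : Fin q → ℝ),
      (∀ i, T i ∈ 𝒮) ∧ (∀ i, 0 ≤ lam i) ∧ (∑ i, lam i = 1) ∧
      (∀ u, p u ≤ ∑ i, if u ∈ T i then lam i else 0) :=
  exists_distribution_of_weightwise_domination_general 𝒮 p hA
end

section
/- Let H = (V,E) be a hypergraph and let x be an extreme point of the fractional matching polytope P(H) := {x ∈ ℝ^E_{≥0} : Σ_{e ∈ δ(v)} x(e) ≤ 1 for all v ∈ V}. Then Σ_{e ∈ supp(x)} |e|·x(e) ≥ |supp(x)|; equivalently, on average over the edges in the support of x, the value |e|·x(e) is at least 1. -/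
open Finset

/-- If `x` is an extreme point of the fractional matching polytope
of a hypergraph `H = (V, E)`, then `∑_{e ∈ supp(x)} |e| * x e ≥ |supp(x)|`, i.e.,
on average over the support the value `|e| * x e` is at least `1`. -/
theorem extremePoint_average_load
    {α : Type*} [DecidableEq α] (V : Finset α) (E : Finset (Finset α))
    (hE : ∀ e ∈ E, e.Nonempty ∧ e ⊆ V)
    (P : Set ({e // e ∈ E} → ℝ))
    (hP : P = {y | (∀ e, 0 ≤ y e) ∧
      ∀ v ∈ V, ∑ e : {e // e ∈ E}, (if v ∈ e.1 then y e else 0) ≤ 1})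
    (x : {e // e ∈ E} → ℝ)
    (hx : x ∈ Set.extremePoints ℝ P) :
    ((Finset.univ.filter (fun e : {e // e ∈ E} => 0 < x e)).card : ℝ)
      ≤ ∑ e ∈ Finset.univ.filter (fun e : {e // e ∈ E} => 0 < x e),
          (e.1.card : ℝ) * x e := by
  classical
  subst hP
  rw [mem_extremePoints] at hx
  obtain ⟨⟨hx0, hxV⟩, hext⟩ := hx
  set S : Finset {e // e ∈ E} := Finset.univ.filter (fun e => 0 < x e) with hSdef
  have hxS : ∀ e : {e // e ∈ E}, e ∉ S → x e = 0 := by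
    intro e he
    simp only [hSdef, Finset.mem_filter, Finset.mem_univ, true_and, not_lt] at he
    exact le_antisymm he (hx0 e)
  set T : Finset α :=
    V.filter (fun v => ∑ e : {e // e ∈ E}, (if v ∈ e.1 then x e else 0) = 1) with hTdef
  -- Step 1 : (T.card : ℝ) ≤ ∑ e ∈ S, |e| * x e
  have key1 : (T.card : ℝ) ≤ ∑ e ∈ S, (e.1.card : ℝ) * x e := by
    have h1 : ∑ e ∈ S, (e.1.card : ℝ) * x e
        = ∑ e : {e // e ∈ E}, (e.1.card : ℝ) * x e := by
      apply Finset.sum_subset (Finset.subset_univ _)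
      intro e _ he
      rw [hxS e he, mul_zero]
    have h2 : ∀ e : {e // e ∈ E}, (e.1.card : ℝ) * x e
        = ∑ v ∈ V, (if v ∈ e.1 then x e else 0) := by
      intro e
      rw [← Finset.sum_filter]
      have hfe : V.filter (fun v => v ∈ e.1) = e.1 := by
        ext v
        simp only [Finset.mem_filter, and_iff_right_iff_imp]
        exact fun hv => (hE e.1 e.2).2 hv
      rw [hfe, Finset.sum_const, nsmul_eq_mul]
    rw [h1]
    calc (T.card : ℝ) = ∑ _v ∈ T, (1 : ℝ) := by
          rw [Finset.sum_const, nsmul_eq_mul, mul_one]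
      _ = ∑ v ∈ T, ∑ e : {e // e ∈ E}, (if v ∈ e.1 then x e else 0) := by
          apply Finset.sum_congr rfl
          intro v hv
          rw [hTdef] at hv
          exact ((Finset.mem_filter.mp hv).2).symm
      _ ≤ ∑ v ∈ V, ∑ e : {e // e ∈ E}, (if v ∈ e.1 then x e else 0) := by
          apply Finset.sum_le_sum_of_subset_of_nonneg (Finset.filter_subset _ _)
          intro v _ _
          exact Finset.sum_nonneg fun e _ => by
            split_ifs
            · exact hx0 e
            · exact le_rfl
      _ = ∑ e : {e // e ∈ E}, ∑ v ∈ V, (if v ∈ e.1 then x e else 0) := Finset.sum_comm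
      _ = ∑ e : {e // e ∈ E}, (e.1.card : ℝ) * x e :=
          Finset.sum_congr rfl fun e _ => (h2 e).symm
  -- Step 2 : S.card ≤ T.card
  have key2 : S.card ≤ T.card := by
    by_contra hgoal
    push_neg at hgoal
    -- the incidence linear map from support coordinates to tight vertices
    set f : ({e // e ∈ S} → ℝ) →ₗ[ℝ] ({v // v ∈ T} → ℝ) :=
      { toFun := fun y v => ∑ e : {e // e ∈ S}, if (v : α) ∈ e.1.1 then y e else 0
        map_add' := by
          intro y z
          funext v
          simp only [Pi.add_apply]
          rw [← Finset.sum_add_distrib]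
          exact Finset.sum_congr rfl fun e _ => by split_ifs <;> simp
        map_smul' := by
          intro c y
          funext v
          simp only [Pi.smul_apply, smul_eq_mul, RingHom.id_apply]
          rw [Finset.mul_sum]
          exact Finset.sum_congr rfl fun e _ => by split_ifs <;> simp } with hfdef
    have hni : ¬ Function.Injective f := by
      intro hinj
      have h1 := LinearMap.finrank_le_finrank_of_injective hinj
      rw [Module.finrank_fintype_fun_eq_card, Module.finrank_fintype_fun_eq_card,
        Fintype.card_coe, Fintype.card_coe] at h1
      exact absurd h1 (not_le.mpr hgoal)
    obtain ⟨d, hdker, hd0⟩ := (Submodule.ne_bot_iff (LinearMap.ker f)).mp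
      (by rw [Ne, LinearMap.ker_eq_bot]; exact hni)
    rw [LinearMap.mem_ker] at hdker
    set D : {e // e ∈ E} → ℝ := fun e => if h : e ∈ S then d ⟨e, h⟩ else 0 with hDdef
    have hDS : ∀ e : {e // e ∈ S}, D e.1 = d e := fun e => dif_pos e.2
    have hDn : ∀ e : {e // e ∈ E}, e ∉ S → D e = 0 := fun e he => dif_neg he
    have hD0 : ∃ e0 : {e // e ∈ E}, D e0 ≠ 0 := by
      obtain ⟨e, he⟩ := Function.ne_iff.mp hd0
      exact ⟨e.1, by rw [hDS e]; simpa using he⟩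
    set M : ℝ := 1 + ∑ e : {e // e ∈ E}, |D e| with hMdef
    have hDsum : (0 : ℝ) ≤ ∑ e : {e // e ∈ E}, |D e| :=
      Finset.sum_nonneg fun e _ => abs_nonneg _
    have hMpos : (0 : ℝ) < M := by rw [hMdef]; linarith
    have hDM : ∀ e : {e // e ∈ E}, |D e| ≤ M := by
      intro e
      have := Finset.single_le_sum (f := fun e : {e // e ∈ E} => |D e|)
        (fun e _ => abs_nonneg _) (Finset.mem_univ e)
      rw [hMdef]; linarith
    -- the candidate set for the perturbation size
    set C : Finset ℝ := insert 1 ((S.image fun e => x e) ∪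
      ((V.filter fun v => ∑ e : {e // e ∈ E}, (if v ∈ e.1 then x e else 0) < 1).image
        fun v => 1 - ∑ e : {e // e ∈ E}, (if v ∈ e.1 then x e else 0))) with hCdef
    have hCne : C.Nonempty := ⟨1, Finset.mem_insert_self _ _⟩
    have hCpos : ∀ c ∈ C, 0 < c := by
      intro c hc
      rw [hCdef] at hc
      simp only [Finset.mem_insert, Finset.mem_union, Finset.mem_image,
        Finset.mem_filter] at hc
      rcases hc with rfl | ⟨e, he, rfl⟩ | ⟨v, ⟨_, hvlt⟩, rfl⟩
      · exact one_pos
      · have : e ∈ Finset.univ.filter (fun e : {e // e ∈ E} => 0 < x e) := hSdef ▸ he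
        exact (Finset.mem_filter.mp this).2
      · linarith
    set ε0 : ℝ := C.min' hCne with hε0def
    have hε0pos : 0 < ε0 := hCpos _ (C.min'_mem hCne)
    have hε0le : ∀ c ∈ C, ε0 ≤ c := fun c hc => C.min'_le c hc
    set ε : ℝ := ε0 / M with hεdef
    have hεpos : 0 < ε := div_pos hε0pos hMpos
    have hεM : ε * M = ε0 := div_mul_cancel₀ _ (ne_of_gt hMpos)
    -- the perturbed points are in P
    have hmem : ∀ s : ℝ, |s| ≤ 1 →
        (fun e => x e + s * ε * D e) ∈ {y : {e // e ∈ E} → ℝ | (∀ e, 0 ≤ y e) ∧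
          ∀ v ∈ V, ∑ e : {e // e ∈ E}, (if v ∈ e.1 then y e else 0) ≤ 1} := by
      intro s hs
      constructor
      · intro e
        by_cases heS : e ∈ S
        · have hxe2 : ε0 ≤ x e := hε0le _ (by
            rw [hCdef]
            exact Finset.mem_insert_of_mem
              (Finset.mem_union_left _ (Finset.mem_image_of_mem _ heS)))
          have h1 : |s * ε * D e| ≤ ε0 := by
            rw [abs_mul, abs_mul, abs_of_pos hεpos, ← hεM]
            calc |s| * ε * |D e| ≤ 1 * ε * M := by
                  apply mul_le_mul (mul_le_mul_of_nonneg_right hs hεpos.le)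
                    (hDM e) (abs_nonneg _)
                  positivity
              _ = ε * M := by ring
          have h2 := neg_abs_le (s * ε * D e)
          simp only
          linarith
        · simp only [hxS e heS, hDn e heS, mul_zero, add_zero, le_refl]
      · intro v hv
        have hsplit : ∑ e : {e // e ∈ E}, (if v ∈ e.1 then x e + s * ε * D e else 0)
            = (∑ e : {e // e ∈ E}, (if v ∈ e.1 then x e else 0))
              + s * ε * ∑ e : {e // e ∈ E}, (if v ∈ e.1 then D e else 0) := by
          rw [Finset.mul_sum, ← Finset.sum_add_distrib]
          exact Finset.sum_congr rfl fun e _ => by split_ifs <;> simp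
        simp only
        rw [hsplit]
        by_cases hvT : v ∈ T
        · have hB : ∑ e : {e // e ∈ E}, (if v ∈ e.1 then D e else 0) = 0 := by
            have h1 : ∑ e : {e // e ∈ E}, (if v ∈ e.1 then D e else 0)
                = ∑ e ∈ S, (if v ∈ e.1 then D e else 0) := by
              symm
              apply Finset.sum_subset (Finset.subset_univ _)
              intro e _ he
              rw [hDn e he]
              simp
            have h2 : ∑ e ∈ S, (if v ∈ e.1 then D e else 0)
                = ∑ e : {e // e ∈ S}, (if v ∈ e.1.1 then d e else 0) := by
              rw [← Finset.sum_coe_sort S (fun e => if v ∈ e.1 then D e else 0)]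
              exact Finset.sum_congr rfl fun e _ => by rw [hDS e]
            have h3 : (∑ e : {e // e ∈ S}, if v ∈ e.1.1 then d e else 0) = 0 :=
              congrFun hdker ⟨v, hvT⟩
            rw [h1, h2, h3]
          rw [hB, mul_zero, add_zero]
          have : v ∈ V.filter
              (fun v => ∑ e : {e // e ∈ E}, (if v ∈ e.1 then x e else 0) = 1) :=
            hTdef ▸ hvT
          rw [(Finset.mem_filter.mp this).2]
        · have hA1 : ∑ e : {e // e ∈ E}, (if v ∈ e.1 then x e else 0) < 1 := by
            rcases lt_or_eq_of_le (hxV v hv) with h | h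
            · exact h
            · exact absurd (hTdef ▸ Finset.mem_filter.mpr ⟨hv, h⟩) hvT
          have hslack : ε0 ≤ 1 - ∑ e : {e // e ∈ E}, (if v ∈ e.1 then x e else 0) := by
            apply hε0le
            rw [hCdef]
            exact Finset.mem_insert_of_mem (Finset.mem_union_right _
              (Finset.mem_image.mpr ⟨v, Finset.mem_filter.mpr ⟨hv, hA1⟩, rfl⟩))
          have hBabs : |∑ e : {e // e ∈ E}, (if v ∈ e.1 then D e else 0)| ≤ M := by
            calc |∑ e : {e // e ∈ E}, (if v ∈ e.1 then D e else 0)|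
                ≤ ∑ e : {e // e ∈ E}, |if v ∈ e.1 then D e else 0| :=
                  Finset.abs_sum_le_sum_abs _ _
              _ ≤ ∑ e : {e // e ∈ E}, |D e| :=
                  Finset.sum_le_sum fun e _ => by split_ifs <;> simp [abs_nonneg]
              _ ≤ M := by rw [hMdef]; linarith
          have hfin : s * ε * ∑ e : {e // e ∈ E}, (if v ∈ e.1 then D e else 0) ≤ ε0 :=
            calc s * ε * ∑ e : {e // e ∈ E}, (if v ∈ e.1 then D e else 0)
                ≤ |s * ε * ∑ e : {e // e ∈ E}, (if v ∈ e.1 then D e else 0)| :=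
                  le_abs_self _
              _ = |s| * ε * |∑ e : {e // e ∈ E}, (if v ∈ e.1 then D e else 0)| := by
                  rw [abs_mul, abs_mul, abs_of_pos hεpos]
              _ ≤ 1 * ε * M := by
                  apply mul_le_mul (mul_le_mul_of_nonneg_right hs hεpos.le)
                    hBabs (abs_nonneg _)
                  positivity
              _ = ε0 := by rw [one_mul, hεM]
          linarith
    -- derive the contradiction with extremality
    obtain ⟨e0, he0⟩ := hD0
    have h1 := hmem 1 (by norm_num)
    have h2 := hmem (-1) (by norm_num)
    have hseg : x ∈ openSegment ℝ (fun e => x e + 1 * ε * D e)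
        (fun e => x e + (-1) * ε * D e) := by
      refine ⟨1/2, 1/2, by norm_num, by norm_num, by norm_num, ?_⟩
      funext e
      simp only [Pi.add_apply, Pi.smul_apply, smul_eq_mul]
      ring
    obtain ⟨hy1, _⟩ := hext _ h1 _ h2 hseg
    have hc := congrFun hy1 e0
    simp only [one_mul] at hc
    have : ε * D e0 = 0 := by linarith
    rcases mul_eq_zero.mp this with h | h
    · exact absurd h (ne_of_gt hεpos)
    · exact he0 h
  calc ((S.card : ℝ)) ≤ (T.card : ℝ) := Nat.cast_le.mpr key2
    _ ≤ _ := key1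
end

section
/- Let H = (V,E) be a hypergraph, b : V → ℤ_{≥1} vertex capacities, x a fractional b-matching on H, and let w : E → ℝ be an arbitrary (possibly negative) weight function. Then there exists a b-matching M ⊆ E such that Σ_{e ∈ M} w(e) ≥ Σ_{e ∈ E} w(e)·x(e) / (|e| − (|e|−1)·x(e)). -/
open Finset

section AuxFKS

variable {α : Type*} [DecidableEq α]

/-- Any partial `b`-matching inside `E` extends to a maximal one. -/
lemma extend_to_maximal_bMatching (V : Finset α) (b : α → ℤ) (E M₀ : Finset (Finset α))
    (hsub : M₀ ⊆ E)
    (hM₀ : ∀ v ∈ V, ((M₀.filter (fun e => v ∈ e)).card : ℤ) ≤ b v)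
    (hEV : ∀ e ∈ E, e ⊆ V) :
    ∃ M, M₀ ⊆ M ∧ M ⊆ E ∧ (∀ v ∈ V, ((M.filter (fun e => v ∈ e)).card : ℤ) ≤ b v) ∧
      (∀ e ∈ E, e ∉ M → ∃ v ∈ e, v ∈ V ∧ b v ≤ ((M.filter (fun e => v ∈ e)).card : ℤ)) := by
  classical
  set S := (E.powerset).filter
    (fun M => M₀ ⊆ M ∧ ∀ v ∈ V, ((M.filter (fun e => v ∈ e)).card : ℤ) ≤ b v) with hS
  have hmem : ∀ M, M ∈ S ↔ M ⊆ E ∧ M₀ ⊆ M ∧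
      ∀ v ∈ V, ((M.filter (fun e => v ∈ e)).card : ℤ) ≤ b v := by
    intro M
    simp [hS, Finset.mem_filter, Finset.mem_powerset, and_assoc]
  have hne : M₀ ∈ S := (hmem M₀).2 ⟨hsub, Finset.Subset.refl _, hM₀⟩
  obtain ⟨M, hMS, hmax⟩ := S.exists_max_image Finset.card ⟨M₀, hne⟩
  obtain ⟨hME, hM₀M, hcap⟩ := (hmem M).1 hMS
  refine ⟨M, hM₀M, hME, hcap, ?_⟩
  intro e heE heM
  by_contra hcon
  push_neg at hcon
  have hins : insert e M ∈ S := by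
    refine (hmem _).2 ⟨Finset.insert_subset heE hME, hM₀M.trans (Finset.subset_insert _ _), ?_⟩
    intro v hvV
    rw [Finset.filter_insert]
    by_cases hv : v ∈ e
    · have hecard : e ∉ M.filter (fun e => v ∈ e) := fun h => heM (Finset.mem_of_mem_filter _ h)
      rw [if_pos hv, Finset.card_insert_of_notMem hecard]
      have := hcon v hv hvV
      push_cast
      omega
    · rw [if_neg hv]; exact hcap v hvV
  have := hmax _ hins
  rw [Finset.card_insert_of_notMem heM] at this
  omega

/-- The linear FKS bound: every maximal `b`-matching `M` satisfies
`∑_{e ∈ E} x e ≤ ∑_{m ∈ M} (|m| - (|m|-1) x m)`. -/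
lemma maximal_bMatching_bound (V : Finset α) (b : α → ℤ) (x : Finset α → ℝ)
    (E M : Finset (Finset α)) (hME : M ⊆ E)
    (hE : ∀ e ∈ E, e.Nonempty ∧ e ⊆ V)
    (hx01 : ∀ e ∈ E, 0 ≤ x e ∧ x e ≤ 1)
    (hxfrac : ∀ v ∈ V, ∑ e ∈ E.filter (fun e => v ∈ e), x e ≤ (b v : ℝ))
    (hmax : ∀ e ∈ E, e ∉ M → ∃ v ∈ e, v ∈ V ∧ b v ≤ ((M.filter (fun e => v ∈ e)).card : ℤ)) :
    ∑ e ∈ E, x e ≤ ∑ m ∈ M, ((m.card : ℝ) - ((m.card : ℝ) - 1) * x m) := by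
  classical
  rcases (E \ M).eq_empty_or_nonempty with hEM | hEM
  · -- E = M
    have hEeq : E = M := Finset.Subset.antisymm
      (fun e he => by by_contra h; exact (Finset.notMem_empty e) (hEM ▸ Finset.mem_sdiff.2 ⟨he, h⟩)) hME
    subst hEeq
    refine Finset.sum_le_sum ?_
    intro e he
    have h1 : (1 : ℝ) ≤ e.card := by
      have := (hE e he).1.card_pos; exact_mod_cast this
    have h01 := hx01 e he
    nlinarith [h01.1, h01.2]
  · obtain ⟨e₀, he₀⟩ := hEM
    have hv₀ : ∃ v₀ : α, True := by
      obtain ⟨v₀, _⟩ := (hE e₀ ((Finset.mem_sdiff.1 he₀).1)).1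
      exact ⟨v₀, trivial⟩
    obtain ⟨v₀, -⟩ := hv₀
    set P : α → Prop := fun v => v ∈ V ∧ b v ≤ ((M.filter (fun e => v ∈ e)).card : ℤ) with hP
    set f : Finset α → α := fun e => if h : ∃ v ∈ e, P v then h.choose else v₀ with hf
    have hfspec : ∀ e ∈ E \ M, f e ∈ e ∧ P (f e) := by
      intro e he
      rw [Finset.mem_sdiff] at he
      obtain ⟨v, hv, hvV, hPv⟩ := hmax e he.1 he.2
      have h : ∃ v ∈ e, P v := ⟨v, hv, hvV, hPv⟩
      simp only [hf, dif_pos h]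
      exact ⟨h.choose_spec.1, h.choose_spec.2⟩
    have hsplit : ∑ e ∈ E \ M, x e + ∑ e ∈ M, x e = ∑ e ∈ E, x e :=
      Finset.sum_sdiff hME
    have hmaps : ∀ e ∈ E \ M, f e ∈ V := by
      intro e he
      exact (hfspec e he).2.1
    have hfiber : ∑ v ∈ V, ∑ e ∈ (E \ M).filter (fun e => f e = v), x e = ∑ e ∈ E \ M, x e :=
      Finset.sum_fiberwise_of_maps_to hmaps _
    have hvert : ∀ v ∈ V, ∑ e ∈ (E \ M).filter (fun e => f e = v), x e
        ≤ ∑ m ∈ M.filter (fun m => v ∈ m), (1 - x m) := by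
      intro v hv
      rcases ((E \ M).filter (fun e => f e = v)).eq_empty_or_nonempty with h0 | h0
      · rw [h0, Finset.sum_empty]
        refine Finset.sum_nonneg ?_
        intro m hm
        have := (hx01 m (hME (Finset.mem_of_mem_filter _ hm))).2
        linarith
      · obtain ⟨e₁, he₁⟩ := h0
        rw [Finset.mem_filter] at he₁
        have hsat : P v := he₁.2 ▸ (hfspec e₁ he₁.1).2
        have hsub2 : (E \ M).filter (fun e => f e = v) ⊆
            (E.filter (fun e => v ∈ e)) \ (M.filter (fun e => v ∈ e)) := by
          intro e he
          rw [Finset.mem_filter] at he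
          obtain ⟨heEM, hfe⟩ := he
          rw [Finset.mem_sdiff] at heEM ⊢
          have hve : v ∈ e := hfe ▸ (hfspec e (Finset.mem_sdiff.2 heEM)).1
          exact ⟨Finset.mem_filter.2 ⟨heEM.1, hve⟩, fun h => heEM.2 (Finset.mem_of_mem_filter _ h)⟩
        have hxnn : ∀ e ∈ (E.filter (fun e => v ∈ e)) \ (M.filter (fun e => v ∈ e)),
            e ∉ (E \ M).filter (fun e => f e = v) → 0 ≤ x e := by
          intro e he _
          exact (hx01 e (Finset.mem_of_mem_filter _ ((Finset.mem_sdiff.1 he).1))).1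
        have h1 : ∑ e ∈ (E \ M).filter (fun e => f e = v), x e
            ≤ ∑ e ∈ (E.filter (fun e => v ∈ e)) \ (M.filter (fun e => v ∈ e)), x e :=
          Finset.sum_le_sum_of_subset_of_nonneg hsub2 hxnn
        have hMsub : M.filter (fun e => v ∈ e) ⊆ E.filter (fun e => v ∈ e) :=
          Finset.filter_subset_filter _ hME
        have h2 : ∑ e ∈ (E.filter (fun e => v ∈ e)) \ (M.filter (fun e => v ∈ e)), x e
            + ∑ e ∈ M.filter (fun e => v ∈ e), x e = ∑ e ∈ E.filter (fun e => v ∈ e), x e :=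
          Finset.sum_sdiff hMsub
        have h3 : (b v : ℝ) ≤ ((M.filter (fun e => v ∈ e)).card : ℝ) := by exact_mod_cast hsat.2
        have h4 := hxfrac v hv
        have h5 : ∑ m ∈ M.filter (fun m => v ∈ m), (1 - x m)
            = ((M.filter (fun e => v ∈ e)).card : ℝ) - ∑ e ∈ M.filter (fun e => v ∈ e), x e := by
          rw [Finset.sum_sub_distrib, Finset.sum_const, nsmul_eq_mul, mul_one]
        linarith
    have hswap : ∑ v ∈ V, ∑ m ∈ M.filter (fun m => v ∈ m), (1 - x m)
        = ∑ m ∈ M, (m.card : ℝ) * (1 - x m) := by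
      have : ∀ v, ∑ m ∈ M.filter (fun m => v ∈ m), (1 - x m)
          = ∑ m ∈ M, if v ∈ m then (1 - x m) else 0 := by
        intro v; rw [Finset.sum_filter]
      simp_rw [this]
      rw [Finset.sum_comm]
      refine Finset.sum_congr rfl ?_
      intro m hm
      rw [Finset.sum_ite_mem, Finset.inter_eq_right.2 (hE m (hME hm)).2,
        Finset.sum_const, nsmul_eq_mul]
    have hfinal : ∑ e ∈ E \ M, x e ≤ ∑ m ∈ M, (m.card : ℝ) * (1 - x m) := by
      rw [← hfiber, ← hswap]
      exact Finset.sum_le_sum hvert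
    have : ∑ m ∈ M, (x m + (m.card : ℝ) * (1 - x m))
        = ∑ m ∈ M, ((m.card : ℝ) - ((m.card : ℝ) - 1) * x m) := by
      refine Finset.sum_congr rfl ?_
      intro m _; ring
    rw [← hsplit, ← this, Finset.sum_add_distrib]
    linarith

/-- Local-ratio induction: the FKS bound for nonnegative weights. -/
lemma fks_nonneg_weights (V : Finset α) (b : α → ℤ) (x : Finset α → ℝ)
    (E : Finset (Finset α)) :
    (∀ v ∈ V, 0 ≤ b v) →
    (∀ e ∈ E, e.Nonempty ∧ e ⊆ V) →
    (∀ e ∈ E, 0 ≤ x e ∧ x e ≤ 1) →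
    (∀ v ∈ V, ∑ e ∈ E.filter (fun e => v ∈ e), x e ≤ (b v : ℝ)) →
    ∀ w : Finset α → ℝ, (∀ e ∈ E, 0 ≤ w e) →
    ∃ M, M ⊆ E ∧ (∀ v ∈ V, ((M.filter (fun e => v ∈ e)).card : ℤ) ≤ b v) ∧
      ∑ e ∈ E, w e * x e / ((e.card : ℝ) - ((e.card : ℝ) - 1) * x e) ≤ ∑ e ∈ M, w e := by
  classical
  induction E using Finset.strongInduction with
  | _ E ih =>
    intro hb hE hx01 hxfrac w hw
    set D : Finset α → ℝ := fun e => (e.card : ℝ) - ((e.card : ℝ) - 1) * x e with hD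
    have hD1 : ∀ e ∈ E, 1 ≤ D e := by
      intro e he
      have h1 : (1 : ℝ) ≤ e.card := by exact_mod_cast (hE e he).1.card_pos
      have h01 := hx01 e he
      simp only [hD]
      nlinarith [h01.1, h01.2]
    rcases E.eq_empty_or_nonempty with rfl | hEne
    · exact ⟨∅, Finset.Subset.refl _, fun v hv => by simpa using hb v hv, by simp⟩
    obtain ⟨e₀, he₀E, he₀min⟩ := E.exists_min_image (fun e => w e / D e) hEne
    set q := w e₀ / D e₀ with hq
    have hq0 : 0 ≤ q := div_nonneg (hw e₀ he₀E) (by linarith [hD1 e₀ he₀E])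
    set w' : Finset α → ℝ := fun e => w e - q * D e with hw'
    have hw'0 : ∀ e ∈ E, 0 ≤ w' e := by
      intro e he
      have hDe : 0 < D e := by linarith [hD1 e he]
      have := he₀min e he
      simp only [hw']
      rw [div_le_div_iff₀ (by linarith [hD1 e₀ he₀E]) hDe] at this
      have hgoal : q * D e ≤ w e := by
        rw [hq, div_mul_eq_mul_div, div_le_iff₀ (by linarith [hD1 e₀ he₀E])]
        linarith [this]
      linarith
    have hw'e₀ : w' e₀ = 0 := by
      have hne : D e₀ ≠ 0 := by linarith [hD1 e₀ he₀E]
      simp only [hw', hq]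
      rw [div_mul_cancel₀ _ hne, sub_self]
    have hss : E.erase e₀ ⊂ E := Finset.erase_ssubset he₀E
    have hsub : E.erase e₀ ⊆ E := Finset.erase_subset _ _
    obtain ⟨M₀, hM₀sub, hM₀cap, hM₀ineq⟩ :=
      ih (E.erase e₀) hss hb (fun e he => hE e (hsub he)) (fun e he => hx01 e (hsub he))
        (fun v hv => le_trans (Finset.sum_le_sum_of_subset_of_nonneg
          (Finset.filter_subset_filter _ hsub)
          (fun e he _ => (hx01 e (Finset.mem_of_mem_filter _ he)).1)) (hxfrac v hv))
        w' (fun e he => hw'0 e (hsub he))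
    obtain ⟨M, hM₀M, hME, hcap, hmax⟩ :=
      extend_to_maximal_bMatching V b E M₀ (hM₀sub.trans hsub) hM₀cap (fun e he => (hE e he).2)
    refine ⟨M, hME, hcap, ?_⟩
    have hlin := maximal_bMatching_bound V b x E M hME hE hx01 hxfrac hmax
    have hdecomp : ∑ e ∈ E, w e * x e / D e
        = ∑ e ∈ E, w' e * x e / D e + q * ∑ e ∈ E, x e := by
      rw [Finset.mul_sum, ← Finset.sum_add_distrib]
      refine Finset.sum_congr rfl ?_
      intro e he
      have hDe : D e ≠ 0 := by have := hD1 e he; linarith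
      field_simp [hw']
      ring
    have hdrop : ∑ e ∈ E, w' e * x e / D e = ∑ e ∈ E.erase e₀, w' e * x e / D e := by
      rw [← Finset.add_sum_erase _ _ he₀E, hw'e₀]
      simp
    have hM₀M' : ∑ e ∈ M₀, w' e ≤ ∑ e ∈ M, w' e :=
      Finset.sum_le_sum_of_subset_of_nonneg hM₀M (fun e he _ => hw'0 e (hME he))
    have hfin : ∑ e ∈ M, w' e + q * ∑ m ∈ M, D m = ∑ e ∈ M, w e := by
      rw [Finset.mul_sum, ← Finset.sum_add_distrib]
      refine Finset.sum_congr rfl ?_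
      intro e _
      simp only [hw']; ring
    calc ∑ e ∈ E, w e * x e / D e
        = ∑ e ∈ E.erase e₀, w' e * x e / D e + q * ∑ e ∈ E, x e := by rw [hdecomp, hdrop]
      _ ≤ ∑ e ∈ M₀, w' e + q * ∑ m ∈ M, D m := by
          refine add_le_add hM₀ineq (mul_le_mul_of_nonneg_left hlin hq0)
      _ ≤ ∑ e ∈ M, w' e + q * ∑ m ∈ M, D m := by linarith [hM₀M']
      _ = ∑ e ∈ M, w e := hfin

end AuxFKS

/-- For any hypergraph `H = (V, E)`, capacities `b : V → ℤ≥1`,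
fractional `b`-matching `x`, and arbitrary (possibly negative) weights `w : E → ℝ`,
there is a `b`-matching `M` with
`∑_{e ∈ M} w e ≥ ∑_{e ∈ E} w e * x e / (|e| - (|e| - 1) * x e)`. -/
theorem exists_bMatching_signed_weights
    {α : Type*} [DecidableEq α] (V : Finset α) (E : Finset (Finset α))
    (hE : ∀ e ∈ E, e.Nonempty ∧ e ⊆ V)
    (b : α → ℤ) (hb : ∀ v ∈ V, 1 ≤ b v)
    (x : Finset α → ℝ)
    (hx01 : ∀ e ∈ E, 0 ≤ x e ∧ x e ≤ 1)
    (hxfrac : ∀ v ∈ V, ∑ e ∈ E.filter (fun e => v ∈ e), x e ≤ (b v : ℝ))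
    (w : Finset α → ℝ) :
    ∃ M ⊆ E,
      (∀ v ∈ V, ((M.filter (fun e => v ∈ e)).card : ℤ) ≤ b v) ∧
      ∑ e ∈ E, w e * x e / ((e.card : ℝ) - ((e.card : ℝ) - 1) * x e)
        ≤ ∑ e ∈ M, w e := by
  classical
  set Ep := E.filter (fun e => 0 < w e) with hEp
  have hEpsub : Ep ⊆ E := Finset.filter_subset _ _
  obtain ⟨M, hMsub, hMcap, hMineq⟩ :=
    fks_nonneg_weights V b x Ep (fun v hv => by linarith [hb v hv])
      (fun e he => hE e (hEpsub he)) (fun e he => hx01 e (hEpsub he))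
      (fun v hv => le_trans (Finset.sum_le_sum_of_subset_of_nonneg
        (Finset.filter_subset_filter _ hEpsub)
        (fun e he _ => (hx01 e (Finset.mem_of_mem_filter _ he)).1)) (hxfrac v hv))
      w (fun e he => le_of_lt (Finset.mem_filter.1 he).2)
  refine ⟨M, hMsub.trans hEpsub, hMcap, ?_⟩
  have hsplit := Finset.sum_filter_add_sum_filter_not E (fun e => 0 < w e)
    (fun e => w e * x e / ((e.card : ℝ) - ((e.card : ℝ) - 1) * x e))
  have hneg : ∑ e ∈ E.filter (fun e => ¬ 0 < w e),
      w e * x e / ((e.card : ℝ) - ((e.card : ℝ) - 1) * x e) ≤ 0 := by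
    refine Finset.sum_nonpos ?_
    intro e he
    rw [Finset.mem_filter] at he
    obtain ⟨heE, hwneg⟩ := he
    push_neg at hwneg
    have h1 : (1 : ℝ) ≤ e.card := by exact_mod_cast (hE e heE).1.card_pos
    have h01 := hx01 e heE
    have hDpos : (0 : ℝ) < (e.card : ℝ) - ((e.card : ℝ) - 1) * x e := by
      nlinarith [h01.1, h01.2]
    have hnum : w e * x e ≤ 0 := mul_nonpos_of_nonpos_of_nonneg hwneg h01.1
    exact div_nonpos_of_nonpos_of_nonneg hnum (le_of_lt hDpos)
  calc ∑ e ∈ E, w e * x e / ((e.card : ℝ) - ((e.card : ℝ) - 1) * x e)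
      = ∑ e ∈ Ep, w e * x e / ((e.card : ℝ) - ((e.card : ℝ) - 1) * x e)
        + ∑ e ∈ E.filter (fun e => ¬ 0 < w e),
            w e * x e / ((e.card : ℝ) - ((e.card : ℝ) - 1) * x e) := by rw [hsplit]
    _ ≤ ∑ e ∈ Ep, w e * x e / ((e.card : ℝ) - ((e.card : ℝ) - 1) * x e) := by linarith
    _ ≤ ∑ e ∈ M, w e := hMineq
end

section
/- Let H = (V,E) be a hypergraph, b : V → ℤ_{≥1} vertex capacities, x a fractional b-matching on H, and let g : E → ℝ satisfy g(e) ≥ 1 for all e ∈ E. Suppose that for every nonnegative weight function w : E → ℝ_{≥0} there exists a b-matching M with Σ_{e ∈ M} g(e)·w(e) ≥ Σ_{e ∈ E} w(e)·x(e). Then for every (possibly negative) weight function w : E → ℝ there exists a b-matching M with Σ_{e ∈ M} w(e) ≥ Σ_{e ∈ E} w(e)·x(e) / g(e). -/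
open Finset

/-!
Apply the hypothesis to the nonnegative weight `max w 0 / g`: since `x ≥ 0` and `g > 0`, its
`x`-weight dominates `∑ w x / g`, while on the resulting `b`-matching `M` the `g`-scaled weight is
`∑_{e ∈ M} max (w e) 0`, which is the `w`-weight of the sub-`b`-matching of edges of `M` with
`w e ≥ 0`.
-/

theorem bMatching_of_subset {α : Type*} [DecidableEq α] {V : Finset α} {b : α → ℤ}
    {M M' : Finset (Finset α)} (hM' : M' ⊆ M)
    (hM : ∀ v ∈ V, ((M.filter (fun e => v ∈ e)).card : ℤ) ≤ b v) :
    ∀ v ∈ V, ((M'.filter (fun e => v ∈ e)).card : ℤ) ≤ b v := fun v hv =>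
  le_trans (by exact_mod_cast card_le_card (filter_subset_filter _ hM')) (hM v hv)

theorem sum_filter_nonneg_eq_sum_max {ι R : Type*} [AddCommMonoid R] [LinearOrder R]
    (s : Finset ι) (f : ι → R) :
    ∑ i ∈ s.filter (fun i => 0 ≤ f i), f i = ∑ i ∈ s, max (f i) 0 := by
  rw [sum_filter]
  refine sum_congr rfl fun i _ => ?_
  split_ifs with h
  · exact (max_eq_left h).symm
  · exact (max_eq_right (le_of_not_ge h)).symm

theorem mul_div_le_max_div_mul {K : Type*} [Field K] [LinearOrder K] [IsStrictOrderedRing K]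
    {w x g : K} (hx : 0 ≤ x) (hg : 0 < g) : w * x / g ≤ max w 0 / g * x := by
  rw [div_mul_eq_mul_div]
  gcongr
  exact le_max_left w 0

theorem bMatching_nonneg_weights_to_signed_weights_general
    {α : Type*} [DecidableEq α] (V : Finset α) (E : Finset (Finset α))
    (b : α → ℤ)
    (x : Finset α → ℝ)
    (hx01 : ∀ e ∈ E, 0 ≤ x e ∧ x e ≤ 1)
    (g : Finset α → ℝ) (hg : ∀ e ∈ E, 1 ≤ g e)
    (hgreedy : ∀ w : Finset α → ℝ, (∀ e ∈ E, 0 ≤ w e) →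
      ∃ M ⊆ E,
        (∀ v ∈ V, ((M.filter (fun e => v ∈ e)).card : ℤ) ≤ b v) ∧
        ∑ e ∈ E, w e * x e ≤ ∑ e ∈ M, g e * w e) :
    ∀ w : Finset α → ℝ,
      ∃ M ⊆ E,
        (∀ v ∈ V, ((M.filter (fun e => v ∈ e)).card : ℤ) ≤ b v) ∧
        ∑ e ∈ E, w e * x e / g e ≤ ∑ e ∈ M, w e := by
  intro w
  have hg_pos : ∀ e ∈ E, 0 < g e := fun e he => one_pos.trans_le (hg e he)
  obtain ⟨M, hME, hM, hM_weight⟩ := hgreedy (fun e => max (w e) 0 / g e)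
    fun e he => div_nonneg (le_max_right _ _) (hg_pos e he).le
  refine ⟨M.filter (fun e => 0 ≤ w e), (filter_subset _ _).trans hME,
    bMatching_of_subset (filter_subset _ _) hM, ?_⟩
  calc ∑ e ∈ E, w e * x e / g e
      ≤ ∑ e ∈ E, max (w e) 0 / g e * x e :=
        sum_le_sum fun e he => mul_div_le_max_div_mul (hx01 e he).1 (hg_pos e he)
    _ ≤ ∑ e ∈ M, g e * (max (w e) 0 / g e) := hM_weight
    _ = ∑ e ∈ M, max (w e) 0 :=
        sum_congr rfl fun e he => mul_div_cancel₀ _ (hg_pos e (hME he)).ne'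
    _ = ∑ e ∈ M.filter (fun e => 0 ≤ w e), w e := (sum_filter_nonneg_eq_sum_max M w).symm

/-- Let `H = (V, E)` be a hypergraph, `b : V → ℤ≥1`, `x` a
fractional `b`-matching, and `g : E → ℝ` with `g e ≥ 1`. If for every nonnegative
weight function there is a `b`-matching `M` with
`∑_{e ∈ M} g e * w e ≥ ∑_{e ∈ E} w e * x e`, then for every (possibly negative)
weight function `w` there is a `b`-matching `M` with
`∑_{e ∈ M} w e ≥ ∑_{e ∈ E} w e * x e / g e`. -/
theorem bMatching_nonneg_weights_to_signed_weights
    {α : Type*} [DecidableEq α] (V : Finset α) (E : Finset (Finset α))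
    (hE : ∀ e ∈ E, e.Nonempty ∧ e ⊆ V)
    (b : α → ℤ) (hb : ∀ v ∈ V, 1 ≤ b v)
    (x : Finset α → ℝ)
    (hx01 : ∀ e ∈ E, 0 ≤ x e ∧ x e ≤ 1)
    (hxfrac : ∀ v ∈ V, ∑ e ∈ E.filter (fun e => v ∈ e), x e ≤ (b v : ℝ))
    (g : Finset α → ℝ) (hg : ∀ e ∈ E, 1 ≤ g e)
    (hgreedy : ∀ w : Finset α → ℝ, (∀ e ∈ E, 0 ≤ w e) →
      ∃ M ⊆ E,
        (∀ v ∈ V, ((M.filter (fun e => v ∈ e)).card : ℤ) ≤ b v) ∧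
        ∑ e ∈ E, w e * x e ≤ ∑ e ∈ M, g e * w e) :
    ∀ w : Finset α → ℝ,
      ∃ M ⊆ E,
        (∀ v ∈ V, ((M.filter (fun e => v ∈ e)).card : ℤ) ≤ b v) ∧
        ∑ e ∈ E, w e * x e / g e ≤ ∑ e ∈ M, w e :=
  bMatching_nonneg_weights_to_signed_weights_general V E b x hx01 g hg hgreedy
end

section
/- Let H = (V,E) be a hypergraph, x a fractional matching on H, and let g : E → ℝ satisfy g(e) ≥ 1 for all e ∈ E. Suppose that for every nonnegative weight function w : E → ℝ_{≥0} there exists a matching M of H with Σ_{e ∈ M} g(e)·w(e) ≥ Σ_{e ∈ E} w(e)·x(e). Then there exists a finitely supported probability distribution over matchings of H, i.e., matchings M_1, …, M_q with coefficients λ_1, …, λ_q ≥ 0 summing to 1, such that Σ_{i : e ∈ M_i} λ_i ≥ x(e)/g(e) for every e ∈ E. -/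
/-!
The vectors dominated coordinatewise by a convex combination of indicator vectors of matchings
form a closed convex set `D`: a polytope plus the nonpositive orthant. If `x / g` were not in `D`,
a functional separating it from `D` would have nonnegative coefficients `w` (as `D` is unbounded
below in every coordinate), and the matching supplied by the hypothesis for the weights `w / g`
would contradict the separation.
-/

open Finset Pointwise

theorem LinearMap.nonneg_apply_of_forall_add_nonpos_lt {E : Type*} [AddCommGroup E]
    [PartialOrder E] [IsOrderedAddMonoid E] [Module ℝ E] (f : E →ₗ[ℝ] ℝ) {c : E} {u : ℝ}
    (hf : ∀ z ≤ 0, f (c + z) < u) {y : E} (hy : 0 ≤ y) : 0 ≤ f y := by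
  by_contra! hneg
  obtain ⟨n, hn⟩ := exists_nat_gt ((u - f c) / -f y)
  have hbound := hf (-(n • y)) (neg_nonpos.2 (nsmul_nonneg hy n))
  rw [div_lt_iff₀ (neg_pos.2 hneg)] at hn
  simp only [map_add, map_neg, map_nsmul, nsmul_eq_mul] at hbound
  linarith

theorem exists_mem_stdSimplex_le_of_forall_nonneg_weights {ι κ : Type*} [Fintype ι] [Fintype κ]
    (p : ι → ℝ) (v : κ → ι → ℝ) (h : ∀ w : ι → ℝ, 0 ≤ w → ∃ k, w ⬝ᵥ p ≤ w ⬝ᵥ v k) :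
    ∃ lam ∈ stdSimplex ℝ κ, p ≤ ∑ k, lam k • v k := by
  classical
  set D : Set (ι → ℝ) := Fintype.linearCombination ℝ v '' stdSimplex ℝ κ + Set.Iic 0
  suffices hp : p ∈ D by
    obtain ⟨_, ⟨lam, hlam, rfl⟩, z, hz, hpz⟩ := hp
    refine ⟨lam, hlam, ?_⟩
    rw [← hpz, Fintype.linearCombination_apply]
    exact add_le_of_nonpos_right hz
  have hv : ∀ k, v k ∈ Fintype.linearCombination ℝ v '' stdSimplex ℝ κ := fun k =>
    ⟨Pi.single k 1, single_mem_stdSimplex ℝ k, by simp [Fintype.linearCombination_apply]⟩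
  have hvD : ∀ k, v k ∈ D := fun k => ⟨v k, hv k, 0, Set.mem_Iic.2 le_rfl, add_zero _⟩
  have hDconv : Convex ℝ D :=
    ((convex_stdSimplex ℝ κ).linear_image _).add (convex_Iic 0)
  have hDclosed : IsClosed D :=
    isClosed_Iic.add_left_of_isCompact
      ((isCompact_stdSimplex ℝ κ).image (LinearMap.continuous_of_finiteDimensional _))
  obtain ⟨k₀, -⟩ := h 0 le_rfl
  by_contra hp
  obtain ⟨f, u, hfD, hup⟩ := geometric_hahn_banach_closed_point hDconv hDclosed hp
  set w : ι → ℝ := fun i => f fun j => if i = j then 1 else 0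
  have hfw : ∀ y, f y = w ⬝ᵥ y := fun y => by
    rw [dotProduct_comm]
    exact (f : (ι → ℝ) →ₗ[ℝ] ℝ).pi_apply_eq_sum_univ y
  have hw : 0 ≤ w := fun i =>
    (f : (ι → ℝ) →ₗ[ℝ] ℝ).nonneg_apply_of_forall_add_nonpos_lt
      (fun z hz => hfD _ (Set.add_mem_add (hv k₀) hz)) (fun j => by positivity)
  obtain ⟨k, hk⟩ := h w hw
  have hvk := hfD _ (hvD k)
  rw [hfw] at hup hvk
  linarith

theorem Finset.exists_mem_stdSimplex_forall_le_of_forall_nonneg_weights {β κ : Type*}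
    [Fintype κ] (s : Finset β) (p : β → ℝ) (v : κ → β → ℝ)
    (h : ∀ w : β → ℝ, (∀ i ∈ s, 0 ≤ w i) → ∃ k, ∑ i ∈ s, w i * p i ≤ ∑ i ∈ s, w i * v k i) :
    ∃ lam ∈ stdSimplex ℝ κ, ∀ i ∈ s, p i ≤ ∑ k, lam k * v k i := by
  obtain ⟨lam, hlam, hle⟩ := exists_mem_stdSimplex_le_of_forall_nonneg_weights
    (fun i : s => p i) (fun k i => v k i) fun w hw => by
      have hext : ∀ i : s, Function.extend Subtype.val w 0 i = w i := fun i =>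
        Subtype.val_injective.extend_apply _ _ i
      obtain ⟨k, hk⟩ := h (Function.extend Subtype.val w 0) fun i hi => by
        simpa [hext ⟨i, hi⟩] using hw ⟨i, hi⟩
      refine ⟨k, ?_⟩
      simpa only [dotProduct, ← Finset.sum_coe_sort s, hext] using hk
  exact ⟨lam, hlam, fun i hi => by simpa using hle ⟨i, hi⟩⟩

def matchings {α : Type*} [DecidableEq α] (E : Finset (Finset α)) : Finset (Finset (Finset α)) :=
  E.powerset.filter fun M => ∀ e₁ ∈ M, ∀ e₂ ∈ M, e₁ ≠ e₂ → Disjoint e₁ e₂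

theorem mem_matchings {α : Type*} [DecidableEq α] {E M : Finset (Finset α)} :
    M ∈ matchings E ↔ M ⊆ E ∧ ∀ e₁ ∈ M, ∀ e₂ ∈ M, e₁ ≠ e₂ → Disjoint e₁ e₂ := by
  rw [matchings, mem_filter, mem_powerset]

theorem distribution_from_weighted_matching_guarantee_general
    {α : Type*} [DecidableEq α] (E : Finset (Finset α))
    (x : Finset α → ℝ)
    (g : Finset α → ℝ) (hg : ∀ e ∈ E, 1 ≤ g e)
    (halg : ∀ w : Finset α → ℝ, (∀ e ∈ E, 0 ≤ w e) →
      ∃ M ⊆ E,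
        (∀ e₁ ∈ M, ∀ e₂ ∈ M, e₁ ≠ e₂ → Disjoint e₁ e₂) ∧
        ∑ e ∈ E, w e * x e ≤ ∑ e ∈ M, g e * w e) :
    ∃ (q : ℕ) (M : Fin q → Finset (Finset α)) (lam : Fin q → ℝ),
      (∀ i, M i ⊆ E) ∧
      (∀ i, ∀ e₁ ∈ M i, ∀ e₂ ∈ M i, e₁ ≠ e₂ → Disjoint e₁ e₂) ∧
      (∀ i, 0 ≤ lam i) ∧ (∑ i, lam i = 1) ∧
      (∀ e ∈ E, x e / g e ≤ ∑ i, if e ∈ M i then lam i else 0) := by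
  have hg₀ : ∀ e ∈ E, 0 < g e := fun e he => zero_lt_one.trans_le (hg e he)
  let Ms : Fin #(matchings E) → Finset (Finset α) := fun j => (matchings E).equivFin.symm j
  have hMs : ∀ j, Ms j ⊆ E ∧ ∀ e₁ ∈ Ms j, ∀ e₂ ∈ Ms j, e₁ ≠ e₂ → Disjoint e₁ e₂ := fun j =>
    mem_matchings.1 ((matchings E).equivFin.symm j).2
  obtain ⟨lam, ⟨hlam₀, hlam₁⟩, hle⟩ := E.exists_mem_stdSimplex_forall_le_of_forall_nonneg_weights
    (fun e => x e / g e) (fun j e => if e ∈ Ms j then 1 else 0) fun w hw => by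
      obtain ⟨M, hME, hM, hwM⟩ :=
        halg (fun e => w e / g e) fun e he => div_nonneg (hw e he) (hg₀ e he).le
      refine ⟨(matchings E).equivFin ⟨M, mem_matchings.2 ⟨hME, hM⟩⟩, ?_⟩
      calc ∑ e ∈ E, w e * (x e / g e) = ∑ e ∈ E, w e / g e * x e := by
            simp only [mul_div_assoc', div_mul_eq_mul_div]
        _ ≤ ∑ e ∈ M, g e * (w e / g e) := hwM
        _ = ∑ e ∈ M, w e := sum_congr rfl fun e he => mul_div_cancel₀ _ (hg₀ e (hME he)).ne'
        _ = ∑ e ∈ E, w e * if e ∈ Ms _ then 1 else 0 := by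
            simp [Ms, mul_ite, sum_ite_mem, inter_eq_right.2 hME]
  exact ⟨_, Ms, lam, fun j => (hMs j).1, fun j => (hMs j).2, hlam₀, hlam₁,
    fun e he => by simpa [mul_ite] using hle e he⟩

/-- Let `H = (V, E)` be a hypergraph, `x` a fractional matching,
and `g : E → ℝ` with `g e ≥ 1`. Suppose for every nonnegative weight function
`w : E → ℝ≥0` there is a matching `M` with
`∑_{e ∈ M} g e * w e ≥ ∑_{e ∈ E} w e * x e`. Then there exists a finitely supported
probability distribution over matchings of `H` whose marginal on each edge `e ∈ E`
is at least `x e / g e`. -/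
theorem distribution_from_weighted_matching_guarantee
    {α : Type*} [DecidableEq α] (V : Finset α) (E : Finset (Finset α))
    (hE : ∀ e ∈ E, e.Nonempty ∧ e ⊆ V)
    (x : Finset α → ℝ)
    (hx01 : ∀ e ∈ E, 0 ≤ x e ∧ x e ≤ 1)
    (hxfrac : ∀ v ∈ V, ∑ e ∈ E.filter (fun e => v ∈ e), x e ≤ 1)
    (g : Finset α → ℝ) (hg : ∀ e ∈ E, 1 ≤ g e)
    (halg : ∀ w : Finset α → ℝ, (∀ e ∈ E, 0 ≤ w e) →
      ∃ M ⊆ E,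
        (∀ e₁ ∈ M, ∀ e₂ ∈ M, e₁ ≠ e₂ → Disjoint e₁ e₂) ∧
        ∑ e ∈ E, w e * x e ≤ ∑ e ∈ M, g e * w e) :
    ∃ (q : ℕ) (M : Fin q → Finset (Finset α)) (lam : Fin q → ℝ),
      (∀ i, M i ⊆ E) ∧
      (∀ i, ∀ e₁ ∈ M i, ∀ e₂ ∈ M i, e₁ ≠ e₂ → Disjoint e₁ e₂) ∧
      (∀ i, 0 ≤ lam i) ∧ (∑ i, lam i = 1) ∧
      (∀ e ∈ E, x e / g e ≤ ∑ i, if e ∈ M i then lam i else 0) :=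
  distribution_from_weighted_matching_guarantee_general E x g hg halg
end

section
/- Let H = (V,E) be a hypergraph and let y : E → ℝ_{>0}. Then the vector z ∈ ℝ^E defined by z(e) := y(e) / (y(e) + Σ_{f ∈ N(e)} y(f)) lies in the matching polytope of H, i.e., z is a convex combination of the characteristic (0/1-indicator) vectors of matchings of H. -/
/-!
Sample a matching greedily: pick an edge `g` with probability `y g / ∑ y`, keep it, and recurse
on the edges disjoint from `g`. By induction on the edge set, every edge `e` ends up in the
matching with probability at least `z e`: deleting edges only shrinks neighbourhoods, hence only
increases `z`, and with `D` the `y`-weight of the edges disjoint from `e` one has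
`z e * ∑ y = y e + z e * D`. Since the matching polytope is closed under lowering coordinates
towards `0`, the vector `z` itself lies in it.
-/

open Finset

section CharVec

variable {β : Type*} [DecidableEq β]

def charVec (M : Finset β) : β → ℝ := fun e => if e ∈ M then 1 else 0

variable {𝒜 : Set (Finset β)} {p : β → ℝ}

theorem nonneg_of_mem_convexHull_charVec (hp : p ∈ convexHull ℝ (charVec '' 𝒜)) : 0 ≤ p := by
  refine convexHull_min ?_ (convex_Ici 0) hp
  rintro _ ⟨M, -, rfl⟩ e
  unfold charVec
  split_ifs <;> norm_num

theorem update_mul_mem_convexHull_charVec (h𝒜 : ∀ M ∈ 𝒜, ∀ a, M.erase a ∈ 𝒜)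
    (hp : p ∈ convexHull ℝ (charVec '' 𝒜)) (a : β) {t : ℝ} (ht₀ : 0 ≤ t) (ht₁ : t ≤ 1) :
    Function.update p a (t * p a) ∈ convexHull ℝ (charVec '' 𝒜) := by
  let scale := LinearMap.mulLeft ℝ (Function.update (1 : β → ℝ) a t)
  have hscale (x : β → ℝ) : scale x = Function.update x a (t * x a) := by
    ext e
    rcases eq_or_ne e a with rfl | hea <;> simp [scale, Function.update_of_ne, *]
  suffices charVec '' 𝒜 ⊆ scale ⁻¹' convexHull ℝ (charVec '' 𝒜) by
    rw [← hscale]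
    exact convexHull_min this ((convex_convexHull ℝ _).linear_preimage scale) hp
  rintro _ ⟨M, hM, rfl⟩
  have hsplit : scale (charVec M) = t • charVec M + (1 - t) • charVec (M.erase a) := by
    ext e
    rw [hscale, Pi.add_apply, Pi.smul_apply, Pi.smul_apply, smul_eq_mul, smul_eq_mul]
    rcases eq_or_ne e a with rfl | hea
    · simp [charVec]
    · simp only [Function.update_of_ne hea, charVec, mem_erase, ne_eq, hea, not_false_eq_true,
        true_and]
      ring
  rw [Set.mem_preimage, hsplit]
  exact convex_convexHull ℝ _ (subset_convexHull ℝ _ (Set.mem_image_of_mem charVec hM))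
    (subset_convexHull ℝ _ (Set.mem_image_of_mem charVec (h𝒜 M hM a))) ht₀ (by linarith) (by ring)

theorem piecewise_mem_convexHull_charVec (h𝒜 : ∀ M ∈ 𝒜, ∀ a, M.erase a ∈ 𝒜)
    (hp : p ∈ convexHull ℝ (charVec '' 𝒜)) (F : Finset β) {x : β → ℝ}
    (hx : ∀ a ∈ F, 0 ≤ x a ∧ x a ≤ p a) :
    F.piecewise x p ∈ convexHull ℝ (charVec '' 𝒜) := by
  induction F using Finset.induction_on with
  | empty => simpa using hp
  | insert a F ha ih =>
    obtain ⟨hxa₀, hxa₁⟩ := hx a (mem_insert_self a F)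
    have hmem := ih fun b hb => hx b (mem_insert_of_mem hb)
    have hxa : x a = x a / p a * F.piecewise x p a := by
      rw [piecewise_eq_of_notMem _ _ _ ha]
      rcases (hxa₀.trans hxa₁).eq_or_lt with hpa | hpa
      · rw [← hpa, mul_zero]; exact le_antisymm (hpa ▸ hxa₁) hxa₀
      · exact (div_mul_cancel₀ _ hpa.ne').symm
    rw [piecewise_insert, hxa]
    exact update_mul_mem_convexHull_charVec h𝒜 hmem a (div_nonneg hxa₀ (hxa₀.trans hxa₁))
      (div_le_one_of_le₀ hxa₁ (hxa₀.trans hxa₁))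

theorem exists_fin_of_mem_convexHull_charVec (hp : p ∈ convexHull ℝ (charVec '' 𝒜)) :
    ∃ (q : ℕ) (M : Fin q → Finset β) (lam : Fin q → ℝ), (∀ i, M i ∈ 𝒜) ∧ (∀ i, 0 ≤ lam i) ∧
      ∑ i, lam i = 1 ∧ ∀ e, p e = ∑ i, if e ∈ M i then lam i else 0 := by
  obtain ⟨ι, _, w, v, hw₀, hw₁, hv, rfl⟩ := mem_convexHull_iff_exists_fintype.1 hp
  choose M hM hMv using hv
  let σ := (Fintype.equivFin ι).symm
  refine ⟨Fintype.card ι, M ∘ σ, w ∘ σ, fun i => hM _, fun i => hw₀ _,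
    (σ.sum_comp w).trans hw₁, fun e => ?_⟩
  simp only [Function.comp_apply, Finset.sum_apply]
  rw [σ.sum_comp (fun i => if e ∈ M i then w i else 0)]
  refine sum_congr rfl fun i _ => ?_
  simp [← hMv, charVec]

end CharVec

section Hypergraph

variable {α : Type*}

def IsMatching (E M : Finset (Finset α)) : Prop :=
  M ⊆ E ∧ (M : Set (Finset α)).Pairwise Disjoint

variable [DecidableEq α]

theorem IsMatching.erase {E M : Finset (Finset α)} (hM : IsMatching E M) (a : Finset α) :
    IsMatching E (M.erase a) :=
  ⟨(erase_subset a M).trans hM.1, hM.2.mono (by simp)⟩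

def matchingPolytope (E : Finset (Finset α)) : Set (Finset α → ℝ) :=
  convexHull ℝ (charVec '' {M | IsMatching E M})

def disjointEdges (E : Finset (Finset α)) (g : Finset α) : Finset (Finset α) :=
  (E.erase g).filter (Disjoint g)

def neighbors (E : Finset (Finset α)) (e : Finset α) : Finset (Finset α) :=
  E.filter fun f => f ≠ e ∧ (f ∩ e).Nonempty

/-- The probability that the exponential clock of `e`, of rate `y e`, rings before the clocks of
all neighbours of `e`. -/
noncomputable def clockVec (E : Finset (Finset α)) (y : Finset α → ℝ) (e : Finset α) : ℝ :=
  y e / (y e + ∑ f ∈ neighbors E e, y f)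

variable {E : Finset (Finset α)} {y : Finset α → ℝ} {e g : Finset α}

theorem mem_disjointEdges : e ∈ disjointEdges E g ↔ e ≠ g ∧ e ∈ E ∧ Disjoint g e := by
  simp [disjointEdges, and_assoc]

theorem mem_disjointEdges_comm (he : e ∈ E) (hg : g ∈ E) :
    e ∈ disjointEdges E g ↔ g ∈ disjointEdges E e := by
  simp [mem_disjointEdges, he, hg, ne_comm, disjoint_comm]

theorem disjointEdges_ssubset (hg : g ∈ E) : disjointEdges E g ⊂ E :=
  (filter_subset _ _).trans_ssubset (erase_ssubset hg)

theorem IsMatching.insert {M : Finset (Finset α)} (hM : IsMatching (disjointEdges E g) M)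
    (hg : g ∈ E) : IsMatching E (insert g M) := by
  refine ⟨insert_subset hg (hM.1.trans ((filter_subset _ _).trans (erase_subset _ _))), ?_⟩
  rw [coe_insert, Set.pairwise_insert_of_symm]
  exact ⟨hM.2, fun f hf _ => (mem_disjointEdges.1 (hM.1 hf)).2.2⟩

theorem charVec_insert {M : Finset (Finset α)} (hg : g ∉ M) :
    charVec (insert g M) = charVec {g} + charVec M := by
  ext e
  rcases eq_or_ne e g with rfl | heg <;> simp [charVec, *]

theorem charVec_add_mem_matchingPolytope {x : Finset α → ℝ} (hg : g ∈ E)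
    (hx : x ∈ matchingPolytope (disjointEdges E g)) : charVec {g} + x ∈ matchingPolytope E := by
  refine convexHull_min ?_ ((convex_convexHull ℝ _).translate_preimage_right _) hx
  rintro _ ⟨M, hM, rfl⟩
  have hgM : g ∉ M := fun h => (mem_disjointEdges.1 (hM.1 h)).1 rfl
  rw [Set.mem_preimage, ← charVec_insert hgM]
  exact subset_convexHull ℝ _ (Set.mem_image_of_mem charVec (hM.insert hg))

theorem neighbors_subset_neighbors {E' : Finset (Finset α)} (h : E' ⊆ E) :
    neighbors E' e ⊆ neighbors E e :=
  filter_subset_filter _ h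

theorem sum_eq_add_sum_neighbors_add_sum_disjointEdges (he : e ∈ E) :
    ∑ f ∈ E, y f = y e + ∑ f ∈ neighbors E e, y f + ∑ f ∈ disjointEdges E e, y f := by
  have hnbhd : neighbors E e = (E.erase e).filter fun f => ¬Disjoint e f := by
    ext f
    simp only [neighbors, mem_filter, mem_erase, not_disjoint_iff_nonempty_inter, inter_comm]
    tauto
  rw [← add_sum_erase E y he, add_assoc, hnbhd, disjointEdges, add_comm (∑ f ∈ _, _),
    sum_filter_add_sum_filter_not]

variable (hy : ∀ f ∈ E, 0 < y f)
include hy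

theorem add_sum_neighbors_pos (he : e ∈ E) : 0 < y e + ∑ f ∈ neighbors E e, y f :=
  add_pos_of_pos_of_nonneg (hy e he) (sum_nonneg fun f hf => (hy f (mem_filter.1 hf).1).le)

theorem clockVec_nonneg (he : e ∈ E) : 0 ≤ clockVec E y e :=
  div_nonneg (hy e he).le (add_sum_neighbors_pos hy he).le

theorem clockVec_le_clockVec_of_subset {E' : Finset (Finset α)} (h : E' ⊆ E) (he : e ∈ E') :
    clockVec E y e ≤ clockVec E' y e :=
  div_le_div_of_nonneg_left (hy e (h he)).le
    (add_sum_neighbors_pos (fun f hf => hy f (h hf)) he)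
    (add_le_add_right (sum_le_sum_of_subset_of_nonneg (neighbors_subset_neighbors h)
      fun f hf _ => (hy f (mem_filter.1 hf).1).le) _)

theorem clockVec_mul_sum (he : e ∈ E) :
    clockVec E y e * ∑ f ∈ E, y f = y e + clockVec E y e * ∑ f ∈ disjointEdges E e, y f := by
  rw [sum_eq_add_sum_neighbors_add_sum_disjointEdges he, mul_add, clockVec,
    div_mul_cancel₀ _ (add_sum_neighbors_pos hy he).ne']

theorem exists_mem_matchingPolytope_clockVec_le :
    ∃ p ∈ matchingPolytope E, ∀ e ∈ E, clockVec E y e ≤ p e := by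
  induction E using Finset.strongInduction with
  | H E ih =>
  rcases E.eq_empty_or_nonempty with rfl | hE
  · exact ⟨charVec ∅, subset_convexHull ℝ _ ⟨∅, ⟨empty_subset _, by simp⟩, rfl⟩, by simp⟩
  have hrest : ∀ g ∈ E, ∃ p ∈ matchingPolytope (disjointEdges E g),
      ∀ e ∈ disjointEdges E g, clockVec (disjointEdges E g) y e ≤ p e := fun g hg =>
    ih _ (disjointEdges_ssubset hg) fun f hf => hy f ((disjointEdges_ssubset hg).subset hf)
  choose! p hp hpy using hrest
  set Y := ∑ g ∈ E, y g
  have hY : 0 < Y := sum_pos hy hE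
  refine ⟨∑ g ∈ E, (y g / Y) • (charVec {g} + p g), ?_, fun e he => ?_⟩
  · exact (convex_convexHull ℝ _).sum_mem (fun g hg => div_nonneg (hy g hg).le hY.le)
      (by rw [← sum_div, div_self hY.ne']) fun g hg => charVec_add_mem_matchingPolytope hg (hp g hg)
  have hp_nonneg (g) (hg : g ∈ E) : 0 ≤ p g e := nonneg_of_mem_convexHull_charVec (hp g hg) e
  have hclock : clockVec E y e * Y ≤ ∑ g ∈ E, y g * (charVec {g} e + p g e) := calc
    clockVec E y e * Y = y e + ∑ g ∈ disjointEdges E e, y g * clockVec E y e := by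
      rw [clockVec_mul_sum hy he, mul_sum]; simp only [mul_comm]
    _ ≤ y e + ∑ g ∈ disjointEdges E e, y g * p g e := by
      gcongr with g hg
      · exact (hy g ((disjointEdges_ssubset he).subset hg)).le
      have hgE := (disjointEdges_ssubset he).subset hg
      have heg := (mem_disjointEdges_comm he hgE).2 hg
      exact (clockVec_le_clockVec_of_subset hy (disjointEdges_ssubset hgE).subset heg).trans
        (hpy g hgE e heg)
    _ ≤ y e + ∑ g ∈ E, y g * p g e :=
      add_le_add_right (sum_le_sum_of_subset_of_nonneg (disjointEdges_ssubset he).subset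
        fun g hg _ => mul_nonneg (hy g hg).le (hp_nonneg g hg)) _
    _ = ∑ g ∈ E, y g * (charVec {g} e + p g e) := by
      simp [mul_add, sum_add_distrib, charVec, he]
  rw [Finset.sum_apply]
  simp only [Pi.smul_apply, smul_eq_mul, div_mul_eq_mul_div]
  rwa [← sum_div, le_div_iff₀ hY]

end Hypergraph

theorem exponential_clocks_vector_in_matching_polytope_general
    {α : Type*} [DecidableEq α] (E : Finset (Finset α))
    (y : Finset α → ℝ) (hy : ∀ e ∈ E, 0 < y e)
    (z : Finset α → ℝ)
    (hz : ∀ e ∈ E, z e =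
      y e / (y e + ∑ f ∈ E.filter (fun f => f ≠ e ∧ (f ∩ e).Nonempty), y f)) :
    ∃ (q : ℕ) (M : Fin q → Finset (Finset α)) (lam : Fin q → ℝ),
      (∀ i, M i ⊆ E) ∧
      (∀ i, ∀ e₁ ∈ M i, ∀ e₂ ∈ M i, e₁ ≠ e₂ → Disjoint e₁ e₂) ∧
      (∀ i, 0 ≤ lam i) ∧ (∑ i, lam i = 1) ∧
      (∀ e ∈ E, z e = ∑ i, if e ∈ M i then lam i else 0) := by
  obtain ⟨p, hp, hclock⟩ := exists_mem_matchingPolytope_clockVec_le hy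
  have hzp : ∀ e ∈ E, 0 ≤ z e ∧ z e ≤ p e := fun e he =>
    hz e he ▸ ⟨clockVec_nonneg hy he, hclock e he⟩
  obtain ⟨q, M, lam, hM, hlam, hsum, hrep⟩ := exists_fin_of_mem_convexHull_charVec
    (piecewise_mem_convexHull_charVec (fun M hM a => hM.erase a) hp E hzp)
  refine ⟨q, M, lam, fun i => (hM i).1, fun i _ h₁ _ h₂ hne => (hM i).2 h₁ h₂ hne, hlam, hsum,
    fun e he => ?_⟩
  rw [← hrep e, piecewise_eq_of_mem _ _ _ he]

/-- Let `H = (V, E)` be a hypergraph and `y : E → ℝ_{>0}`. Then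
the vector `z` with `z e = y e / (y e + ∑_{f ∈ N(e)} y f)` is a convex combination
of characteristic vectors of matchings of `H`, i.e., it lies in the matching
polytope of `H`. -/
theorem exponential_clocks_vector_in_matching_polytope
    {α : Type*} [DecidableEq α] (V : Finset α) (E : Finset (Finset α))
    (hE : ∀ e ∈ E, e.Nonempty ∧ e ⊆ V)
    (y : Finset α → ℝ) (hy : ∀ e ∈ E, 0 < y e)
    (z : Finset α → ℝ)
    (hz : ∀ e ∈ E, z e =
      y e / (y e + ∑ f ∈ E.filter (fun f => f ≠ e ∧ (f ∩ e).Nonempty), y f)) :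
    ∃ (q : ℕ) (M : Fin q → Finset (Finset α)) (lam : Fin q → ℝ),
      (∀ i, M i ⊆ E) ∧
      (∀ i, ∀ e₁ ∈ M i, ∀ e₂ ∈ M i, e₁ ≠ e₂ → Disjoint e₁ e₂) ∧
      (∀ i, 0 ≤ lam i) ∧ (∑ i, lam i = 1) ∧
      (∀ e ∈ E, z e = ∑ i, if e ∈ M i then lam i else 0) :=
  exponential_clocks_vector_in_matching_polytope_general E y hy z hz
end
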